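/- arXiv:1112.3813 — 9 statements merged into one kernel-verified Lean document; each statement's English description precedes it below -/
import Mathlib

section
/- Let X be a real Banach space and let A ⊆ X be a Suslin set. Then for every separable linear subspace V₀ ⊆ X there exists a closed separable linear subspace V ⊆ X with V₀ ⊆ V such that A is σ-upper porous in X if and only if A ∩ V is σ-upper porous in the metric space V. -/
/-!
Analytic sets are separable, so a separable subspace can be made to contain `A`. If
`A = ⋃ Bₙ` with each `Bₙ` upper porous, a hole `ball z r ⊆ ball x R \ Bₙ` can be shrunk to one
with rational radii around a point of any dense set, at the cost of a constant factor. Closing a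
countable set `S` under the centres of such rational holes around its own points, and making it
dense in its span, gives `V = closure S` in which every `Bₙ ∩ V` is still upper porous.
Conversely, holes of a subspace `V` are holes in `X`: in a nontrivial normed space
`ball z r ⊆ ball x R` forces `r + ‖z - x‖ ≤ R`, so the same inclusion holds in `X`.
-/

open Metric Filter Set Topology TopologicalSpace NNReal ENNReal

/-- `porosityGamma A x R` is the supremum of all radii `r ≥ 0` for which there exists `z`
with the open ball `U(z,r)` contained in `U(x,R) \ A`. -/
noncomputable def porosityGamma {X : Type*} [MetricSpace X] (A : Set X) (x : X) (R : ℝ) :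
    ℝ≥0∞ :=
  ⨆ (r : ℝ≥0) (_ : ∃ z : X, Metric.ball z (r : ℝ) ⊆ Metric.ball x R \ A), (r : ℝ≥0∞)

/-- `A` is upper porous at `x` if `limsup_{R→0+} γ(x,R,A)/R > 0`. -/
def UpperPorousAt {X : Type*} [MetricSpace X] (A : Set X) (x : X) : Prop :=
  0 < Filter.limsup (fun R : ℝ => porosityGamma A x R / ENNReal.ofReal R) (𝓝[>] (0 : ℝ))

/-- `A` is upper porous if it is upper porous at each of its points. -/
def UpperPorous {X : Type*} [MetricSpace X] (A : Set X) : Prop :=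
  ∀ x ∈ A, UpperPorousAt A x

/-- `A` is σ-upper porous if it is a countable union of upper porous sets. -/
def SigmaUpperPorous {X : Type*} [MetricSpace X] (A : Set X) : Prop :=
  ∃ B : ℕ → Set X, (∀ n, UpperPorous (B n)) ∧ A = ⋃ n, B n

theorem MeasureTheory.AnalyticSet.isSeparable {α : Type*} [TopologicalSpace α] {s : Set α}
    (hs : MeasureTheory.AnalyticSet s) : TopologicalSpace.IsSeparable s := by
  rw [MeasureTheory.AnalyticSet] at hs
  rcases hs with rfl | ⟨f, hf, rfl⟩
  · exact countable_empty.isSeparable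
  · exact isSeparable_range hf

theorem Set.Countable.exists_countable_superset_stable_span_subset_closure
    {R M : Type*} [Semiring R] [TopologicalSpace R] [SeparableSpace R]
    [AddCommMonoid M] [Module R M] [TopologicalSpace M] [ContinuousAdd M] [ContinuousSMul R M]
    {S₀ : Set M} (hS₀ : S₀.Countable) (W : M → Set M) (hW : ∀ x, (W x).Countable) :
    ∃ S : Set M, S.Countable ∧ S₀ ⊆ S ∧ (∀ x ∈ S, W x ⊆ S) ∧
      (Submodule.span R S : Set M) ⊆ closure S := by
  choose dense hdense using fun C : Set M =>
    show ∃ D : Set M, C.Countable → D.Countable ∧ (Submodule.span R C : Set M) ⊆ closure D by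
      by_cases hC : C.Countable
      · obtain ⟨D, hD⟩ := hC.isSeparable.span (R := R)
        exact ⟨D, fun _ => hD⟩
      · exact ⟨∅, fun h => absurd h hC⟩
  let step : Set M → Set M := fun C => C ∪ dense C ∪ ⋃ x ∈ C, W x
  let S : ℕ → Set M := fun k => step^[k] S₀
  have hS_succ (k : ℕ) : S (k + 1) = step (S k) := Function.iterate_succ_apply' ..
  have hSc (k : ℕ) : (S k).Countable := by
    induction k with
    | zero => exact hS₀
    | succ k ih =>
      rw [hS_succ]
      exact (ih.union (hdense _ ih).1).union (ih.biUnion fun x _ => hW x)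
  have hS_mono : Monotone S := monotone_nat_of_le_succ fun k => by
    rw [hS_succ]
    exact subset_union_left.trans subset_union_left
  have hW_sub (k : ℕ) : ∀ x ∈ S k, W x ⊆ S (k + 1) := fun x hx => by
    rw [hS_succ]
    exact (subset_biUnion_of_mem hx).trans subset_union_right
  have hdense_sub (k : ℕ) : dense (S k) ⊆ S (k + 1) := by
    rw [hS_succ]
    exact subset_union_right.trans subset_union_left
  refine ⟨⋃ k, S k, countable_iUnion hSc, subset_iUnion S 0, ?_, ?_⟩
  · intro x hx
    obtain ⟨k, hk⟩ := mem_iUnion.1 hx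
    exact (hW_sub k x hk).trans (subset_iUnion S (k + 1))
  · intro x hx
    have hdir : Directed (· ≤ ·) fun k => Submodule.span R (S k) :=
      Monotone.directed_le fun _ _ h => Submodule.span_mono (hS_mono h)
    rw [SetLike.mem_coe, Submodule.span_iUnion, Submodule.mem_iSup_of_directed _ hdir] at hx
    obtain ⟨k, hk⟩ := hx
    exact closure_mono ((hdense_sub k).trans (subset_iUnion S (k + 1))) ((hdense _ (hSc k)).2 hk)

section MetricSpace

variable {X : Type*} [MetricSpace X] {A : Set X} {x z : X} {R r : ℝ}

theorem ofReal_le_porosityGamma (h : ball z r ⊆ ball x R \ A) :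
    ENNReal.ofReal r ≤ porosityGamma A x R := by
  rcases le_or_gt r 0 with hr | hr
  · simp [ENNReal.ofReal_of_nonpos hr]
  · exact le_iSup₂_of_le r.toNNReal ⟨z, by rwa [Real.coe_toNNReal _ hr.le]⟩ le_rfl

theorem exists_ball_of_lt_porosityGamma {a : ℝ≥0∞} (h : a < porosityGamma A x R) :
    ∃ r : ℝ≥0, (∃ z, ball z r ⊆ ball x R \ A) ∧ a < r := by
  simpa [porosityGamma, lt_iSup_iff] using h

theorem upperPorousAt_iff : UpperPorousAt A x ↔
    ∃ c > 0, ∃ᶠ R in 𝓝[>] (0 : ℝ), ∃ z, ∃ r, c * R ≤ r ∧ ball z r ⊆ ball x R \ A := by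
  constructor
  · intro h
    obtain ⟨c, hc, hc_lt⟩ := exists_between h
    have hc_top : c ≠ ⊤ := hc_lt.ne_top
    refine ⟨c.toReal, ENNReal.toReal_pos hc.ne' hc_top, ?_⟩
    refine ((frequently_lt_of_lt_limsup (by isBoundedDefault) hc_lt).and_eventually
      self_mem_nhdsWithin).mono fun R ⟨hR, hR₀⟩ => ?_
    obtain ⟨r, ⟨z, hz⟩, hr⟩ := exists_ball_of_lt_porosityGamma (ENNReal.mul_lt_of_lt_div hR)
    refine ⟨z, r, ?_, hz⟩
    rw [← ENNReal.ofReal_toReal hc_top, ← ENNReal.ofReal_mul ENNReal.toReal_nonneg] at hr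
    simpa using (ENNReal.ofReal_le_iff_le_toReal ENNReal.coe_ne_top).1 hr.le
  · rintro ⟨c, hc, h⟩
    refine (ENNReal.ofReal_pos.2 hc).trans_le (le_limsup_of_frequently_le' ?_)
    refine (h.and_eventually self_mem_nhdsWithin).mono fun R ⟨⟨z, r, hcr, hz⟩, hR⟩ => ?_
    rw [ENNReal.le_div_iff_mul_le (.inl (ENNReal.ofReal_pos.2 hR).ne') (.inl ENNReal.ofReal_ne_top),
      ← ENNReal.ofReal_mul hc.le]
    exact (ENNReal.ofReal_le_ofReal hcr).trans (ofReal_le_porosityGamma hz)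

def RationalHolesCenteredIn (B D V : Set X) : Prop :=
  ∀ d ∈ D, ∀ q p : ℚ, (∃ z, ball z p ⊆ ball d q \ B) → ∃ z ∈ V, ball z p ⊆ ball d q \ B

theorem exists_ball_subtype_subset_of_ball_subset {V D B : Set X} (hVD : V ⊆ closure D)
    (hholes : RationalHolesCenteredIn B D V)
    {x : V} {c : ℝ} (hc : 0 < c) (hR : 0 < R) (hcr : c * R ≤ r)
    (hz : ball z r ⊆ ball (x : X) R \ B) :
    ∃ (w : V) (p : ℝ), c / 4 * (2 * R) ≤ p ∧ ball w p ⊆ ball x (2 * R) \ Subtype.val ⁻¹' B := by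
  obtain ⟨d, hd, hxd⟩ := Metric.mem_closure_iff.1 (hVD x.2) (R / 4) (by positivity)
  obtain ⟨q, hq₁, hq₂⟩ := exists_rat_btwn (show 5 / 4 * R < 3 / 2 * R by linarith)
  obtain ⟨p, hp₁, hp₂⟩ := exists_rat_btwn (show c * R / 2 < c * R by linarith [mul_pos hc hR])
  have hxR_dq : ball (x : X) R ⊆ ball d q := ball_subset_ball' (by linarith)
  have hdq_x2R : ball d q ⊆ ball (x : X) (2 * R) := ball_subset_ball' (by rw [dist_comm]; linarith)
  obtain ⟨w, hwV, hw⟩ := hholes d hd q p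
    ⟨z, ((ball_subset_ball (by linarith)).trans hz).trans (sdiff_subset_sdiff_left hxR_dq)⟩
  exact ⟨⟨w, hwV⟩, p, by linarith, fun y hy => sdiff_subset_sdiff_left hdq_x2R (hw hy)⟩

theorem UpperPorousAt.preimage_subtype_val {V D B : Set X} (hVD : V ⊆ closure D)
    (hholes : RationalHolesCenteredIn B D V)
    {x : V} (hx : UpperPorousAt B x) : UpperPorousAt (Subtype.val ⁻¹' B : Set V) x := by
  obtain ⟨c, hc, hfreq⟩ := upperPorousAt_iff.1 hx
  refine upperPorousAt_iff.2 ⟨c / 4, by positivity, ?_⟩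
  have hdouble : Tendsto (fun R : ℝ => 2 * R) (𝓝[>] 0) (𝓝[>] 0) :=
    tendsto_iff_comap.2 (comap_mulLeft_nhdsGT_zero two_pos).ge
  refine hdouble.frequently ((hfreq.and_eventually self_mem_nhdsWithin).mono ?_)
  rintro R ⟨⟨z, r, hcr, hz⟩, hR⟩
  exact exists_ball_subtype_subset_of_ball_subset hVD hholes hc hR hcr hz

theorem SigmaUpperPorous.preimage_subtype_val {A V D : Set X} {B : ℕ → Set X}
    (hB : ∀ n, UpperPorous (B n)) (hAB : A = ⋃ n, B n) (hVD : V ⊆ closure D)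
    (hholes : ∀ n, RationalHolesCenteredIn (B n) D V) :
    SigmaUpperPorous (Subtype.val ⁻¹' A : Set V) := by
  subst hAB
  exact ⟨fun n => Subtype.val ⁻¹' B n,
    fun n x hx => (hB n x hx).preimage_subtype_val hVD (hholes n), preimage_iUnion⟩

end MetricSpace

section NormedSpace

variable {E : Type*} [NormedAddCommGroup E] [NormedSpace ℝ E]

theorem add_dist_le_of_ball_subset_ball [Nontrivial E] {x z : E} {r R : ℝ} (hr : 0 < r)
    (h : ball z r ⊆ ball x R) : r + dist z x ≤ R := by
  obtain ⟨u, hu, hzx⟩ : ∃ u : E, ‖u‖ = 1 ∧ z - x = dist z x • u := by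
    rcases eq_or_ne z x with rfl | hzx
    · obtain ⟨u, hu⟩ := exists_norm_eq E zero_le_one
      exact ⟨u, hu, by simp⟩
    · have hzx' : ‖z - x‖ ≠ 0 := norm_ne_zero_iff.2 (sub_ne_zero.2 hzx)
      refine ⟨‖z - x‖⁻¹ • (z - x), ?_, ?_⟩
      · rw [norm_smul, norm_inv, norm_norm, inv_mul_cancel₀ hzx']
      · rw [dist_eq_norm, smul_smul, mul_inv_cancel₀ hzx', one_smul]
  have hray {s : ℝ} (hs₀ : 0 ≤ s) (hsr : s < r) : dist z x + s < R := by
    have hmem : z + s • u ∈ ball z r := by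
      rwa [mem_ball, dist_eq_norm, add_sub_cancel_left, norm_smul, hu, mul_one,
        Real.norm_of_nonneg hs₀]
    have := mem_ball.1 (h hmem)
    rwa [dist_eq_norm, add_sub_right_comm, hzx, ← add_smul, norm_smul, hu, mul_one,
      Real.norm_of_nonneg (by positivity)] at this
  by_contra! hlt
  have := hray (le_max_left 0 (R - dist z x)) (max_lt hr (by linarith))
  linarith [le_max_right 0 (R - dist z x)]

theorem UpperPorousAt.image_subtype_val {V : Submodule ℝ E} {B : Set V} {x : V} (hxB : x ∈ B)
    (h : UpperPorousAt B x) : UpperPorousAt (Subtype.val '' B) (x : E) := by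
  obtain ⟨c, hc, hfreq⟩ := upperPorousAt_iff.1 h
  refine upperPorousAt_iff.2 ⟨c, hc, (hfreq.and_eventually self_mem_nhdsWithin).mono ?_⟩
  rintro R ⟨⟨z, r, hcr, hz⟩, hR⟩
  have hr : 0 < r := (mul_pos hc hR).trans_le hcr
  refine ⟨z, r, hcr, subset_sdiff.2 ⟨?_, ?_⟩⟩
  · rcases subsingleton_or_nontrivial V with hV | hV
    · -- in the zero subspace the hole `ball z r` would contain `x ∈ B`
      exact absurd hxB (hz (Subsingleton.elim z x ▸ mem_ball_self hr)).2
    · exact ball_subset_ball' (add_dist_le_of_ball_subset_ball (E := V) hr (hz.trans sdiff_subset))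
  · rw [Set.disjoint_left]
    rintro _ hy ⟨y, hyB, rfl⟩
    exact (hz hy).2 hyB

theorem SigmaUpperPorous.image_subtype_val {V : Submodule ℝ E} {B : Set V}
    (h : SigmaUpperPorous B) : SigmaUpperPorous (Subtype.val '' B) := by
  obtain ⟨C, hC, rfl⟩ := h
  refine ⟨fun n => Subtype.val '' C n, fun n _ ⟨x, hx, hx_eq⟩ => ?_, image_iUnion⟩
  exact hx_eq ▸ (hC n x hx).image_subtype_val hx

end NormedSpace

theorem sigmaUpperPorous_separably_determined_general
    {X : Type*} [NormedAddCommGroup X] [NormedSpace ℝ X]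
    (A : Set X) (hA : MeasureTheory.AnalyticSet A)
    (V₀ : Subspace ℝ X) (hV₀ : TopologicalSpace.IsSeparable (V₀ : Set X)) :
    ∃ V : Subspace ℝ X, IsClosed (V : Set X) ∧ TopologicalSpace.IsSeparable (V : Set X) ∧
      V₀ ≤ V ∧
      (SigmaUpperPorous A ↔ SigmaUpperPorous ((Subtype.val ⁻¹' A) : Set V)) := by
  obtain ⟨DA, hDA_count, hA_DA⟩ := hA.isSeparable
  obtain ⟨D₀, hD₀_count, hV₀_D₀⟩ := hV₀
  obtain ⟨B, hB⟩ : ∃ B : ℕ → Set X,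
      SigmaUpperPorous A → (∀ n, UpperPorous (B n)) ∧ A = ⋃ n, B n := by
    by_cases hσ : SigmaUpperPorous A
    · obtain ⟨B, hB⟩ := hσ
      exact ⟨B, fun _ => hB⟩
    · exact ⟨fun _ => ∅, fun h => absurd h hσ⟩
  choose! center hcenter using
    fun (n : ℕ) (d : X) (q p : ℚ) (h : ∃ z, ball z p ⊆ ball d q \ B n) => h
  obtain ⟨S, hS_count, hS₀, hS_center, hS_span⟩ :=
    (hD₀_count.union hDA_count).exists_countable_superset_stable_span_subset_closure (R := ℝ)
      (fun d => ⋃ n, range fun qp : ℚ × ℚ => center n d qp.1 qp.2)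
      (fun _ => countable_iUnion fun _ => countable_range _)
  let V : Subspace ℝ X := (Submodule.span ℝ S).topologicalClosure
  have hV : (V : Set X) = closure S := by
    rw [Submodule.topologicalClosure_coe]
    exact (closure_minimal hS_span isClosed_closure).antisymm (closure_mono Submodule.subset_span)
  have hAV : A ⊆ V := hV ▸ hA_DA.trans (closure_mono (subset_union_right.trans hS₀))
  refine ⟨V, (Submodule.span ℝ S).isClosed_topologicalClosure, hV ▸ hS_count.isSeparable.closure,
    fun v hv => ?_, fun hσ => ?_, fun hσ => ?_⟩
  · rw [← SetLike.mem_coe, hV]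
    exact closure_mono (subset_union_left.trans hS₀) (hV₀_D₀ hv)
  · obtain ⟨hB_por, hAB⟩ := hB hσ
    refine SigmaUpperPorous.preimage_subtype_val hB_por hAB hV.subset fun n d hd q p hhole => ?_
    have hmem : center n d q p ∈ S := hS_center d hd (mem_iUnion.2 ⟨n, (q, p), rfl⟩)
    exact ⟨_, hV ▸ subset_closure hmem, hcenter n d q p hhole⟩
  · have := hσ.image_subtype_val
    rwa [image_preimage_eq_of_subset (by rwa [Subtype.range_coe])] at this

/-- σ-upper porosity of Suslin subsets of a Banach space is separably determined. -/
theorem sigmaUpperPorous_separably_determined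
    {X : Type*} [NormedAddCommGroup X] [NormedSpace ℝ X] [CompleteSpace X]
    (A : Set X) (hA : MeasureTheory.AnalyticSet A)
    (V₀ : Subspace ℝ X) (hV₀ : TopologicalSpace.IsSeparable (V₀ : Set X)) :
    ∃ V : Subspace ℝ X, IsClosed (V : Set X) ∧ TopologicalSpace.IsSeparable (V : Set X) ∧
      V₀ ≤ V ∧
      (SigmaUpperPorous A ↔ SigmaUpperPorous ((Subtype.val ⁻¹' A) : Set V)) :=
  sigmaUpperPorous_separably_determined_general A hA V₀ hV₀
end

section
/- Let X be a topologically complete metric space, let g be a porosity function, and let F be a Foran system for ⟨g⟩-porosity in X. Then no member of F is σ-⟨g⟩-porous. -/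
open Metric Filter Set Topology TopologicalSpace NNReal ENNReal

/-- `A` is `⟨g⟩`-porous at `x` (for a porosity function `g` defined on `[0,h)`) if there are
sequences of centers `c n` and radii `0 < r n < h` with `c n → x`, `U(c n, r n) ∩ A = ∅` and
`x ∈ U(c n, g (r n))` for each `n`. -/
def GPorousAt {X : Type*} [MetricSpace X] (g : ℝ → ℝ) (h : ℝ) (A : Set X) (x : X) : Prop :=
  ∃ (c : ℕ → X) (r : ℕ → ℝ), Filter.Tendsto c Filter.atTop (nhds x) ∧
    ∀ n, 0 < r n ∧ r n < h ∧ Metric.ball (c n) (r n) ∩ A = ∅ ∧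
      x ∈ Metric.ball (c n) (g (r n))

/-- `A` is `⟨g⟩`-porous if it is `⟨g⟩`-porous at each of its points. -/
def GPorous {X : Type*} [MetricSpace X] (g : ℝ → ℝ) (h : ℝ) (A : Set X) : Prop :=
  ∀ x ∈ A, GPorousAt g h A x

/-- `A` is σ-`⟨g⟩`-porous if it is a countable union of `⟨g⟩`-porous sets. -/
def SigmaGPorous {X : Type*} [MetricSpace X] (g : ℝ → ℝ) (h : ℝ) (A : Set X) : Prop :=
  ∃ B : ℕ → Set X, (∀ n, GPorous g h (B n)) ∧ A = ⋃ n, B n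

/-- A Foran system for `⟨g⟩`-porosity in `X`: a nonempty family of nonempty `G_δ` subsets of `X`
such that for each `S` in the family and each open `G` with `S ∩ G ≠ ∅` there is a member
`S* ⊆ S ∩ G` such that `S` is `⟨g⟩`-porous at no point of `S*`. -/
def IsForanSystem {X : Type*} [MetricSpace X] (g : ℝ → ℝ) (h : ℝ) (F : Set (Set X)) : Prop :=
  F.Nonempty ∧ (∀ S ∈ F, S.Nonempty ∧ IsGδ S) ∧
    ∀ S ∈ F, ∀ G : Set X, IsOpen G → (S ∩ G).Nonempty →
      ∃ T ∈ F, T ⊆ S ∩ G ∧ ∀ x ∈ T, ¬ GPorousAt g h S x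

/-- A metric space is topologically complete if its topology is induced by some complete
metric. -/
def TopComplete (X : Type*) [m : MetricSpace X] : Prop :=
  ∃ m' : MetricSpace X, m'.toUniformSpace.toTopologicalSpace =
      m.toUniformSpace.toTopologicalSpace ∧ @CompleteSpace X m'.toUniformSpace

lemma foran_step {X : Type*} [MetricSpace X] {g : ℝ → ℝ} {h : ℝ} (hh : 0 < h)
    (hg0 : g 0 = 0) (hg : StrictMonoOn g (Set.Ico 0 h)) {F : Set (Set X)}
    (hF : IsForanSystem g h F) {S V : Set X} (hS : S ∈ F) (hV : IsOpen V)
    (hne : (S ∩ V).Nonempty) {A : Set X} (hA : GPorous g h A) :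
    ∃ T ∈ F, T ⊆ S ∩ V ∧ T ∩ A = ∅ := by
  by_cases hc : ∃ W : Set X, IsOpen W ∧ W ⊆ V ∧ W ∩ A = ∅ ∧ (S ∩ W).Nonempty
  · obtain ⟨W, hWo, hWV, hWA, hSW⟩ := hc
    obtain ⟨T, hTF, hTsub, -⟩ := hF.2.2 S hS W hWo hSW
    exact ⟨T, hTF, hTsub.trans (inter_subset_inter_right _ hWV),
      eq_empty_of_subset_empty (hWA ▸ inter_subset_inter_left _ fun x hx => (hTsub hx).2)⟩
  · push_neg at hc
    -- in the bad case, S is porous at every point of A ∩ V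
    have key : ∀ b ∈ A ∩ V, GPorousAt g h S b := by
      rintro b ⟨hbA, hbV⟩
      obtain ⟨c, r, hcb, hcr⟩ := hA b hbA
      obtain ⟨ε, hε, hball⟩ := Metric.isOpen_iff.1 hV b hbV
      set δ : ℝ := min (ε / 2) (h / 2) with hδdef
      have hδ : 0 < δ := lt_min (by linarith) (by linarith)
      have hδh : δ < h := (min_le_right _ _).trans_lt (by linarith)
      have hgδ : 0 < g δ := by
        have := hg ⟨le_refl 0, hh⟩ ⟨hδ.le, hδh⟩ hδ
        simpa [hg0] using this
      have hmem : ∀ᶠ k in atTop, dist (c k) b < min δ (g δ) :=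
        (Metric.tendsto_nhds.1 hcb) _ (lt_min hδ hgδ)
      obtain ⟨N, hN⟩ := eventually_atTop.1 hmem
      refine ⟨fun k => c (k + N), fun k => min (r (k + N)) δ, ?_, fun k => ?_⟩
      · exact hcb.comp (tendsto_add_atTop_nat N)
      · obtain ⟨hr0, hrh, hrA, hrb⟩ := hcr (k + N)
        have hdN : dist (c (k + N)) b < min δ (g δ) := hN _ (Nat.le_add_left N k)
        have h1 : 0 < min (r (k + N)) δ := lt_min hr0 hδ
        have h2 : min (r (k + N)) δ < h := (min_le_right _ _).trans_lt hδh
        have hsubV : Metric.ball (c (k + N)) (min (r (k + N)) δ) ⊆ V := by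
          intro y hy
          apply hball
          have : dist y (c (k + N)) < δ := lt_of_lt_of_le hy (min_le_right _ _)
          calc dist y b ≤ dist y (c (k + N)) + dist (c (k + N)) b := dist_triangle _ _ _
            _ < δ + δ := add_lt_add this (hdN.trans_le (min_le_left _ _))
            _ ≤ ε / 2 + ε / 2 := by
                have : δ ≤ ε / 2 := min_le_left _ _
                linarith
            _ = ε := by ring
        have hAdisj : Metric.ball (c (k + N)) (min (r (k + N)) δ) ∩ A = ∅ :=
          eq_empty_of_subset_empty (hrA ▸ inter_subset_inter_left _
            (Metric.ball_subset_ball (min_le_left _ _)))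
        have hSdisj : Metric.ball (c (k + N)) (min (r (k + N)) δ) ∩ S = ∅ := by
          have := hc _ Metric.isOpen_ball hsubV hAdisj
          rwa [inter_comm] at this
        refine ⟨h1, h2, hSdisj, ?_⟩
        show b ∈ Metric.ball (c (k + N)) (g (min (r (k + N)) δ))
        rcases le_or_gt (r (k + N)) δ with hle | hlt
        · rw [min_eq_left hle]
          exact hrb
        · rw [min_eq_right hlt.le]
          exact Metric.mem_ball.2 (by rw [dist_comm]; exact hdN.trans_le (min_le_right _ _))
    obtain ⟨T, hTF, hTsub, hTnp⟩ := hF.2.2 S hS V hV hne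
    refine ⟨T, hTF, hTsub, ?_⟩
    rw [eq_empty_iff_forall_notMem]
    rintro x ⟨hxT, hxA⟩
    exact hTnp x hxT (key x ⟨hxA, (hTsub hxT).2⟩)

open Classical in
noncomputable def opnOf {X : Type*} [TopologicalSpace X] (A : Set X) : ℕ → Set X :=
  if hA : IsGδ A then hA.eq_iInter_nat.choose else fun _ => Set.univ

lemma opnOf_isOpen {X : Type*} [TopologicalSpace X] (A : Set X) (n : ℕ) :
    IsOpen (opnOf A n) := by
  unfold opnOf
  split
  next hA => exact hA.eq_iInter_nat.choose_spec.1 n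
  next => exact isOpen_univ

lemma opnOf_eq {X : Type*} [TopologicalSpace X] {A : Set X} (hA : IsGδ A) :
    A = ⋂ n, opnOf A n := by
  unfold opnOf
  rw [dif_pos hA]
  exact hA.eq_iInter_nat.choose_spec.2

lemma opnOf_subset {X : Type*} [TopologicalSpace X] {A : Set X} (hA : IsGδ A) (n : ℕ) :
    A ⊆ opnOf A n := by
  conv_lhs => rw [opnOf_eq hA]
  exact Set.iInter_subset _ n

lemma limit_of_geometric {X : Type*} [MetricSpace X] [CompleteSpace X] (x : ℕ → X)
    (hx : ∀ n, dist (x n) (x (n + 1)) ≤ (1 / 2 : ℝ) ^ n) :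
    ∃ p : X, Filter.Tendsto x Filter.atTop (nhds p) :=
  cauchySeq_tendsto_of_complete
    (cauchySeq_of_le_geometric (1 / 2) 1 (by norm_num) (by simpa using hx))

/-- State for the inductive construction in the Foran lemma. -/
structure ForanSt (X : Type*) where
  idx : ℕ
  hist : ℕ → Set X
  pt : X
  V : Set X

/-- Invariant of a single state. -/
def InvSt {X : Type*} [MetricSpace X] (F : Set (Set X)) (s : ForanSt X) : Prop :=
  (∀ k ≤ s.idx, s.hist k ∈ F) ∧ (∀ k ≤ s.idx, s.hist s.idx ⊆ s.hist k) ∧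
    s.pt ∈ s.hist s.idx ∧ IsOpen s.V ∧ s.pt ∈ s.V

/-- Transition relation between consecutive states. -/
def RelSt {X : Type*} [MetricSpace X] (F : Set (Set X)) (B : ℕ → Set X)
    (W : ℕ → X → Set X) (s t : ForanSt X) : Prop :=
  t.idx = s.idx + 1 ∧ (∀ k ≤ s.idx, t.hist k = s.hist k) ∧
    t.hist t.idx ⊆ s.hist s.idx ∧ t.hist t.idx ⊆ t.V ∧ t.hist t.idx ∩ B s.idx = ∅ ∧
    closure t.V ⊆ s.V ∧ closure t.V ⊆ W s.idx s.pt ∧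
    (∀ k ≤ s.idx, ∀ m ≤ s.idx, closure t.V ⊆ opnOf (s.hist k) m) ∧ InvSt F t

lemma step_exists {X : Type*} [MetricSpace X] {g : ℝ → ℝ} {h : ℝ} (hh : 0 < h)
    (hg0 : g 0 = 0) (hg : StrictMonoOn g (Set.Ico 0 h)) {F : Set (Set X)}
    (hF : IsForanSystem g h F) {B : ℕ → Set X} (hB : ∀ n, GPorous g h (B n))
    {W : ℕ → X → Set X} (hW : ∀ n x, x ∈ W n x ∧ IsOpen (W n x)) (s : ForanSt X)
    (hs : InvSt F s) : ∃ t, RelSt F B W s t := by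
  obtain ⟨hmem, hchain, hpt, hVo, hptV⟩ := hs
  set O : Set X := s.V ∩ W s.idx s.pt ∩
    ⋂ k ∈ Finset.range (s.idx + 1), ⋂ m ∈ Finset.range (s.idx + 1), opnOf (s.hist k) m with hO
  have hOo : IsOpen O := (hVo.inter (hW _ _).2).inter
    (isOpen_biInter_finset fun k _ => isOpen_biInter_finset fun m _ => opnOf_isOpen _ m)
  have hxO : s.pt ∈ O := by
    refine ⟨⟨hptV, (hW _ _).1⟩, ?_⟩
    simp only [Set.mem_iInter, Finset.mem_range]
    intro k hk m hm
    exact opnOf_subset (hF.2.1 _ (hmem k (Nat.lt_succ_iff.1 hk))).2 m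
      (hchain k (Nat.lt_succ_iff.1 hk) hpt)
  obtain ⟨ε, hε, hball⟩ := Metric.isOpen_iff.1 hOo s.pt hxO
  set V' : Set X := Metric.ball s.pt (ε / 2) with hV'def
  have hV'o : IsOpen V' := Metric.isOpen_ball
  have hptV' : s.pt ∈ V' := Metric.mem_ball_self (by linarith)
  have hclV' : closure V' ⊆ O :=
    (Metric.closure_ball_subset_closedBall).trans
      ((Metric.closedBall_subset_ball (by linarith)).trans hball)
  obtain ⟨T, hTF, hTsub, hTB⟩ := foran_step hh hg0 hg hF (hmem s.idx le_rfl) hV'o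
    ⟨s.pt, hpt, hptV'⟩ (hB s.idx)
  obtain ⟨x', hx'⟩ := (hF.2.1 T hTF).1
  have hupd : ∀ k ≤ s.idx, Function.update s.hist (s.idx + 1) T k = s.hist k := by
    intro k hk
    exact Function.update_of_ne (by omega) _ _
  have hupds : Function.update s.hist (s.idx + 1) T (s.idx + 1) = T :=
    Function.update_self _ _ _
  refine ⟨⟨s.idx + 1, Function.update s.hist (s.idx + 1) T, x', V'⟩, rfl, hupd, ?_, ?_, ?_,
    hclV'.trans fun y hy => hy.1.1, hclV'.trans fun y hy => hy.1.2, ?_, ?_⟩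
  · show Function.update s.hist (s.idx + 1) T (s.idx + 1) ⊆ s.hist s.idx
    rw [hupds]; exact fun y hy => (hTsub hy).1
  · show Function.update s.hist (s.idx + 1) T (s.idx + 1) ⊆ V'
    rw [hupds]; exact fun y hy => (hTsub hy).2
  · show Function.update s.hist (s.idx + 1) T (s.idx + 1) ∩ B s.idx = ∅
    rw [hupds]; exact hTB
  · intro k hk m hm
    refine hclV'.trans fun y hy => ?_
    have := hy.2
    simp only [Set.mem_iInter, Finset.mem_range] at this
    exact this k (by omega) m (by omega)
  · refine ⟨?_, ?_, ?_, hV'o, (hTsub hx').2⟩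
    · intro k hk
      replace hk : k ≤ s.idx + 1 := hk
      show Function.update s.hist (s.idx + 1) T k ∈ F
      rcases eq_or_lt_of_le hk with hk' | hk'
      · rw [hk', hupds]; exact hTF
      · rw [hupd k (by omega)]; exact hmem k (by omega)
    · intro k hk
      replace hk : k ≤ s.idx + 1 := hk
      show Function.update s.hist (s.idx + 1) T (s.idx + 1) ⊆ Function.update s.hist (s.idx + 1) T k
      rw [hupds]
      rcases eq_or_lt_of_le hk with hk' | hk'
      · rw [hk', hupds]
      · rw [hupd k (by omega)]
        exact fun y hy => hchain k (by omega) (hTsub hy).1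
    · show x' ∈ Function.update s.hist (s.idx + 1) T (s.idx + 1)
      rw [hupds]; exact hx'

/-- From topological completeness, extract a "shrinking scheme": neighborhoods `W n x` of `x`
such that any sequence with `x (n+1) ∈ W n (x n)` converges. -/
lemma topComplete_scheme {X : Type*} [MetricSpace X] (hX : TopComplete X) :
    ∃ W : ℕ → X → Set X, (∀ n x, x ∈ W n x ∧ IsOpen (W n x)) ∧
      ∀ x : ℕ → X, (∀ n, x (n + 1) ∈ W n (x n)) →
        ∃ p, Filter.Tendsto x Filter.atTop (nhds p) := by
  obtain ⟨m', htop, hcomp⟩ := hX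
  refine ⟨fun n x => Metric.ball x ((1 / 2 : ℝ) ^ n), fun n x => ⟨?_, ?_⟩, fun x hx => ?_⟩
  · exact Metric.mem_ball_self (by positivity)
  · have : @IsOpen X m'.toUniformSpace.toTopologicalSpace (Metric.ball x ((1 / 2 : ℝ) ^ n)) :=
      Metric.isOpen_ball
    rwa [htop] at this
  · have hd : ∀ n, dist (x n) (x (n + 1)) ≤ (1 / 2 : ℝ) ^ n := by
      intro n
      have := Metric.mem_ball.1 (hx n)
      rw [dist_comm]
      exact this.le
    obtain ⟨p, hp⟩ := limit_of_geometric x hd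
    refine ⟨p, ?_⟩
    rwa [htop] at hp

/-- Foran Lemma: no member of a Foran system for `⟨g⟩`-porosity in a topologically complete
metric space is σ-`⟨g⟩`-porous. -/
theorem foran_lemma {X : Type*} [MetricSpace X] (hX : TopComplete X)
    (g : ℝ → ℝ) (h : ℝ) (hh : 0 < h) (hg0 : g 0 = 0) (hg : StrictMonoOn g (Set.Ico 0 h))
    (F : Set (Set X)) (hF : IsForanSystem g h F) :
    ∀ S ∈ F, ¬ SigmaGPorous g h S := by
  intro S hS hsig
  obtain ⟨B, hB, hSB⟩ := hsig
  obtain ⟨W, hW, hWlim⟩ := topComplete_scheme hX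
  obtain ⟨x0, hx0⟩ := (hF.2.1 S hS).1
  have hchoice : ∀ s : ForanSt X, ∃ t : ForanSt X, InvSt F s → RelSt F B W s t := by
    intro s
    by_cases hs : InvSt F s
    · obtain ⟨t, ht⟩ := step_exists hh hg0 hg hF hB hW s hs
      exact ⟨t, fun _ => ht⟩
    · exact ⟨s, fun hs' => absurd hs' hs⟩
  choose stepf hstepf using hchoice
  set s0 : ForanSt X := ⟨0, fun _ => S, x0, Set.univ⟩ with hs0
  set seq : ℕ → ForanSt X := fun n => Nat.rec s0 (fun _ ih => stepf ih) n with hseq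
  have hInv0 : InvSt F s0 :=
    ⟨fun k _ => hS, fun k _ => subset_rfl, hx0, isOpen_univ, Set.mem_univ _⟩
  have hInv : ∀ n, InvSt F (seq n) := by
    intro n
    induction n with
    | zero => exact hInv0
    | succ n ih => exact (hstepf (seq n) ih).2.2.2.2.2.2.2.2
  have hRel : ∀ n, RelSt F B W (seq n) (seq (n + 1)) := fun n => hstepf (seq n) (hInv n)
  have hidx : ∀ n, (seq n).idx = n := by
    intro n
    induction n with
    | zero => rfl
    | succ n ih => rw [(hRel n).1, ih]
  set Sn : ℕ → Set X := fun n => (seq n).hist n with hSn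
  set xs : ℕ → X := fun n => (seq n).pt with hxs
  set Vs : ℕ → Set X := fun n => (seq n).V with hVs
  have hstab : ∀ n k, k ≤ n → (seq n).hist k = Sn k := by
    intro n
    induction n with
    | zero => intro k hk; rw [Nat.le_zero.1 hk]
    | succ n ih =>
      intro k hk
      rcases eq_or_lt_of_le hk with hk' | hk'
      · rw [hk']
      · have h2 := (hRel n).2.1 k (by rw [hidx]; omega)
        rw [h2, ih k (by omega)]
  have hSnF : ∀ n, Sn n ∈ F := fun n => (hInv n).1 n (le_of_eq (hidx n).symm)
  have hptSn : ∀ n, xs n ∈ Sn n := by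
    intro n
    have := (hInv n).2.2.1
    rwa [hidx n] at this
  have hxsVs : ∀ n, xs n ∈ Vs n := fun n => (hInv n).2.2.2.2
  have hdisj : ∀ n, Sn (n + 1) ∩ B n = ∅ := by
    intro n
    have := (hRel n).2.2.2.2.1
    rwa [hidx n, hidx (n + 1)] at this
  have hSV : ∀ n, Sn (n + 1) ⊆ Vs (n + 1) := by
    intro n
    have := (hRel n).2.2.2.1
    rwa [hidx (n + 1)] at this
  have hclV : ∀ n, closure (Vs (n + 1)) ⊆ Vs n := fun n => (hRel n).2.2.2.2.2.1
  have hclW : ∀ n, closure (Vs (n + 1)) ⊆ W n (xs n) := by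
    intro n
    have := (hRel n).2.2.2.2.2.2.1
    rwa [hidx n] at this
  have hopns : ∀ n k m, k ≤ n → m ≤ n → closure (Vs (n + 1)) ⊆ opnOf (Sn k) m := by
    intro n k m hk hm
    have := (hRel n).2.2.2.2.2.2.2.1 k (by rw [hidx]; omega) m (by rw [hidx]; omega)
    rwa [hstab n k hk] at this
  have hxsW : ∀ n, xs (n + 1) ∈ W n (xs n) :=
    fun n => hclW n (subset_closure (hSV n (hptSn (n + 1))))
  obtain ⟨p, hp⟩ := hWlim xs hxsW
  have hVsmono : ∀ N j, N ≤ j → Vs j ⊆ Vs N := by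
    intro N j hj
    induction j with
    | zero => rw [Nat.le_zero.1 hj]
    | succ j ih =>
      rcases eq_or_lt_of_le hj with hj' | hj'
      · rw [hj']
      · exact (subset_closure.trans (hclV j)).trans (ih (by omega))
  have hpcl : ∀ N, p ∈ closure (Vs N) := by
    intro N
    refine mem_closure_of_tendsto hp (eventually_atTop.2 ⟨N, fun j hj => ?_⟩)
    exact hVsmono N j hj (hxsVs j)
  have hpSn : ∀ k, p ∈ Sn k := by
    intro k
    rw [show Sn k = ⋂ m, opnOf (Sn k) m from opnOf_eq (hF.2.1 _ (hSnF k)).2]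
    refine Set.mem_iInter.2 fun m => ?_
    exact hopns (max k m) k m (le_max_left _ _) (le_max_right _ _) (hpcl (max k m + 1))
  have hpS : p ∈ S := hpSn 0
  rw [hSB] at hpS
  obtain ⟨i, hi⟩ := Set.mem_iUnion.1 hpS
  exact eq_empty_iff_forall_notMem.1 (hdisj i) p ⟨hpSn (i + 1), hi⟩
end

section
/- Let X be a topologically complete metric space, let A ⊆ X be a nonempty G_δ set, and let g be a porosity function. Then A is not σ-⟨g⟩-porous if and only if A contains a member of some Foran system for ⟨g⟩-porosity in X. -/
open Metric Filter Set Topology TopologicalSpace NNReal ENNReal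

section Porosity

variable {X : Type*} [MetricSpace X] {g : ℝ → ℝ} {h : ℝ}

def IsGHole (g : ℝ → ℝ) (h : ℝ) (E : Set X) (x c : X) (ρ : ℝ) : Prop :=
  0 < ρ ∧ ρ < h ∧ ball c ρ ∩ E = ∅ ∧ x ∈ ball c (g ρ)

theorem gporousAt_iff_forall_exists_hole {E : Set X} {x : X} :
    GPorousAt g h E x ↔ ∀ ε > 0, ∃ c ρ, IsGHole g h E x c ρ ∧ dist x c < ε := by
  constructor
  · rintro ⟨c, r, hc, hr⟩ ε hε
    obtain ⟨N, hN⟩ := tendsto_atTop.1 hc ε hε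
    exact ⟨c N, r N, hr N, by rw [dist_comm]; exact hN N le_rfl⟩
  · intro hx
    choose c ρ hhole hdist using fun n : ℕ => hx (1 / (n + 1)) Nat.one_div_pos_of_nat
    refine ⟨c, ρ, ?_, hhole⟩
    refine tendsto_iff_dist_tendsto_zero.2 <| squeeze_zero (fun _ => dist_nonneg)
      (fun n => ?_) tendsto_one_div_add_atTop_nhds_zero_nat
    rw [dist_comm]
    exact (hdist n).le

theorem GPorousAt.mono {E E' : Set X} {x : X} (hE : GPorousAt g h E x) (hE' : E' ⊆ E) :
    GPorousAt g h E' x := by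
  obtain ⟨c, r, hc, hr⟩ := hE
  refine ⟨c, r, hc, fun n => ⟨(hr n).1, (hr n).2.1, ?_, (hr n).2.2.2⟩⟩
  exact subset_empty_iff.1 ((hr n).2.2.1 ▸ inter_subset_inter_right _ hE')

theorem GPorous.mono {E E' : Set X} (hE : GPorous g h E) (hE' : E' ⊆ E) : GPorous g h E' :=
  fun x hx => (hE x (hE' hx)).mono hE'

theorem GPorousAt.closure {E : Set X} {x : X} (hE : GPorousAt g h E x) :
    GPorousAt g h (closure E) x := by
  obtain ⟨c, r, hc, hr⟩ := hE
  refine ⟨c, r, hc, fun n => ⟨(hr n).1, (hr n).2.1, ?_, (hr n).2.2.2⟩⟩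
  rw [← disjoint_iff_inter_eq_empty]
  exact (disjoint_iff_inter_eq_empty.2 (hr n).2.2.1).closure_right isOpen_ball

theorem GPorousAt.exists_small_hole (hh : 0 < h) (hg0 : g 0 = 0)
    (hg : StrictMonoOn g (Ico 0 h)) {E : Set X} {x : X} (hE : GPorousAt g h E x)
    {ε : ℝ} (hε : 0 < ε) : ∃ c ρ, IsGHole g h E x c ρ ∧ ρ < ε ∧ dist x c < ε := by
  set ρ₀ := min (ε / 2) (h / 2)
  have hρ₀ : 0 < ρ₀ := lt_min (half_pos hε) (half_pos hh)
  have hρ₀ε : ρ₀ < ε := (min_le_left _ _).trans_lt (half_lt_self hε)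
  have hρ₀h : ρ₀ < h := (min_le_right _ _).trans_lt (half_lt_self hh)
  have hgρ₀ : 0 < g ρ₀ := hg0 ▸ hg ⟨le_rfl, hh⟩ ⟨hρ₀.le, hρ₀h⟩ hρ₀
  obtain ⟨c, ρ, ⟨hρ, hρh, hhole, hxc⟩, hdist⟩ :=
    gporousAt_iff_forall_exists_hole.1 hE _ (lt_min hε hgρ₀)
  rcases le_or_gt ρ ρ₀ with hle | hlt
  · exact ⟨c, ρ, ⟨hρ, hρh, hhole, hxc⟩, hle.trans_lt hρ₀ε, hdist.trans_le (min_le_left _ _)⟩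
  · refine ⟨c, ρ₀, ⟨hρ₀, hρ₀h, ?_, mem_ball.2 (hdist.trans_le (min_le_right _ _))⟩, hρ₀ε,
      hdist.trans_le (min_le_left _ _)⟩
    exact subset_empty_iff.1 (hhole ▸ inter_subset_inter_left _ (ball_subset_ball hlt.le))

theorem GPorousAt.of_inter_subset (hh : 0 < h) (hg0 : g 0 = 0)
    (hg : StrictMonoOn g (Ico 0 h)) {E E' U : Set X} {x : X} (hE' : GPorousAt g h E' x)
    (hU : U ∈ 𝓝 x) (hEU : E ∩ U ⊆ E') : GPorousAt g h E x := by
  obtain ⟨δ, hδ, hball⟩ := Metric.mem_nhds_iff.1 hU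
  refine gporousAt_iff_forall_exists_hole.2 fun ε hε => ?_
  obtain ⟨c, ρ, ⟨hρ, hρh, hhole, hxc⟩, hρε, hdist⟩ :=
    hE'.exists_small_hole hh hg0 hg (lt_min (half_pos hδ) hε)
  refine ⟨c, ρ, ⟨hρ, hρh, subset_empty_iff.1 fun z ⟨hzc, hzE⟩ => ?_, hxc⟩,
    hdist.trans_le (min_le_right _ _)⟩
  have hzx : dist z x < δ := calc
    dist z x ≤ dist z c + dist x c := dist_triangle_right _ _ _
    _ < δ / 2 + δ / 2 := add_lt_add ((mem_ball.1 hzc).trans (hρε.trans_le (min_le_left _ _)))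
      (hdist.trans_le (min_le_left _ _))
    _ = δ := add_halves δ
  exact hhole.subset ⟨hzc, hEU ⟨hzE, hball (mem_ball.2 hzx)⟩⟩

theorem isGδ_setOf_gporousAt (E : Set X) : IsGδ {x | GPorousAt g h E x} := by
  have hW : {x | GPorousAt g h E x} =
      ⋂ n : ℕ, ⋃ (c : X) (ρ : ℝ) (_ : 0 < ρ ∧ ρ < h ∧ ball c ρ ∩ E = ∅),
        ball c (min (g ρ) (1 / (n + 1))) := by
    ext x
    simp only [mem_ofPred_eq, mem_iInter, mem_iUnion, mem_ball, lt_min_iff, exists_prop]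
    refine gporousAt_iff_forall_exists_hole.trans ⟨fun hx n => ?_, fun hx ε hε => ?_⟩
    · obtain ⟨c, ρ, ⟨hρ, hρh, hhole, hxc⟩, hdist⟩ := hx _ (Nat.one_div_pos_of_nat (n := n))
      exact ⟨c, ρ, ⟨hρ, hρh, hhole⟩, hxc, hdist⟩
    · obtain ⟨n, hn⟩ := exists_nat_one_div_lt hε
      obtain ⟨c, ρ, ⟨hρ, hρh, hhole⟩, hxc, hdist⟩ := hx n
      exact ⟨c, ρ, ⟨hρ, hρh, hhole, hxc⟩, hdist.trans hn⟩
  rw [hW]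
  exact .iInter_of_isOpen fun n => isOpen_iUnion fun c => isOpen_iUnion fun ρ =>
    isOpen_iUnion fun _ => isOpen_ball

end Porosity

section SigmaPorosity

variable {X : Type*} [MetricSpace X] {g : ℝ → ℝ} {h : ℝ}

theorem sigmaGPorous_of_subset_iUnion {ι : Type*} [Countable ι] {A : Set X} {B : ι → Set X}
    (hB : ∀ i, GPorous g h (B i)) (hA : A ⊆ ⋃ i, B i) : SigmaGPorous g h A := by
  rcases isEmpty_or_nonempty ι with hι | hι
  · refine ⟨fun _ => ∅, fun _ _ hx => absurd hx (notMem_empty _), ?_⟩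
    simpa only [iUnion_of_empty, subset_empty_iff, iUnion_empty] using hA
  · obtain ⟨e, he⟩ := exists_surjective_nat ι
    refine ⟨fun n => B (e n) ∩ A, fun n => (hB (e n)).mono inter_subset_left,
      subset_antisymm (fun x hx => ?_) (iUnion_subset fun n => inter_subset_right)⟩
    obtain ⟨i, hi⟩ := mem_iUnion.1 (hA hx)
    obtain ⟨n, rfl⟩ := he i
    exact mem_iUnion.2 ⟨n, hi, hx⟩

theorem GPorous.sigmaGPorous {A : Set X} (hA : GPorous g h A) : SigmaGPorous g h A :=
  sigmaGPorous_of_subset_iUnion (B := fun _ : Unit => A) (fun _ => hA)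
    (subset_iUnion_of_subset () le_rfl)

theorem SigmaGPorous.mono {A A' : Set X} (hA : SigmaGPorous g h A) (hA' : A' ⊆ A) :
    SigmaGPorous g h A' := by
  obtain ⟨B, hB, rfl⟩ := hA
  exact sigmaGPorous_of_subset_iUnion hB hA'

theorem SigmaGPorous.iUnion {ι : Type*} [Countable ι] {A : ι → Set X}
    (hA : ∀ i, SigmaGPorous g h (A i)) : SigmaGPorous g h (⋃ i, A i) := by
  choose B hB hAB using hA
  refine sigmaGPorous_of_subset_iUnion (B := fun p : ι × ℕ => B p.1 p.2)
    (fun p => hB p.1 p.2) ?_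
  simp only [hAB, iUnion_subset_iff]
  exact fun i n => subset_iUnion_of_subset (i, n) le_rfl

theorem SigmaGPorous.union {A A' : Set X} (hA : SigmaGPorous g h A)
    (hA' : SigmaGPorous g h A') : SigmaGPorous g h (A ∪ A') := by
  rw [union_eq_iUnion]
  exact .iUnion fun b => by cases b <;> assumption

end SigmaPorosity

section Localization

variable {X : Type*} [MetricSpace X] {g : ℝ → ℝ} {h : ℝ}

/-- Without separability there is no countable subcover. Instead `X` is well-ordered and each
`y ∈ B` is indexed by the least `x` with `y ∈ U x`; two points of `Q n k` closer than `1/(k+1)`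
then have the same index, so near each of its points `Q n k` lies in a single porous `P x n`. -/
theorem sigmaGPorous_of_forall_exists_isOpen (hh : 0 < h) (hg0 : g 0 = 0)
    (hg : StrictMonoOn g (Ico 0 h)) {B : Set X}
    (hB : ∀ x ∈ B, ∃ U, IsOpen U ∧ x ∈ U ∧ SigmaGPorous g h (B ∩ U)) : SigmaGPorous g h B := by
  choose! U hUo hxU P hP hBP using hB
  have wf := (@WellOrderingRel.isWellOrder X).wf
  let IsIndex (n k : ℕ) (y x : X) : Prop :=
    x ∈ B ∧ y ∈ P x n ∧ ball y (1 / (k + 1)) ⊆ U x ∧ ∀ x' ∈ B, WellOrderingRel x' x → y ∉ U x'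
  let Q (n k : ℕ) : Set X := {y | ∃ x, IsIndex n k y x}
  have index_eq {n k : ℕ} {y z x x' : X} (hy : IsIndex n k y x) (hz : IsIndex n k z x')
      (hzy : dist z y < 1 / (k + 1)) : x' = x := by
    rcases trichotomous (r := WellOrderingRel) x' x with hlt | heq | hgt
    · exact absurd (hz.2.2.1 (mem_ball'.2 hzy)) (hy.2.2.2 x' hz.1 hlt)
    · exact heq
    · exact absurd (hy.2.2.1 (mem_ball.2 hzy)) (hz.2.2.2 x hy.1 hgt)
  have hQ (n k : ℕ) : GPorous g h (Q n k) := by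
    rintro y ⟨x, hy⟩
    refine (hP x hy.1 n y hy.2.1).of_inter_subset hh hg0 hg
      (ball_mem_nhds y (Nat.one_div_pos_of_nat (n := k))) ?_
    rintro z ⟨⟨x', hz⟩, hzy⟩
    exact index_eq hy hz (mem_ball.1 hzy) ▸ hz.2.1
  refine sigmaGPorous_of_subset_iUnion (B := fun p : ℕ × ℕ => Q p.1 p.2) (fun p => hQ _ _)
    fun y hy => ?_
  have hne : {x | x ∈ B ∧ y ∈ U x}.Nonempty := ⟨y, hy, hxU y hy⟩
  obtain ⟨hxB, hyU⟩ := wf.min_mem _ hne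
  set x := wf.min _ hne
  obtain ⟨n, hyP⟩ := mem_iUnion.1 (hBP x hxB ▸ mem_inter hy hyU)
  obtain ⟨ε, hε, hεU⟩ := isOpen_iff.1 (hUo x hxB) y hyU
  obtain ⟨k, hk⟩ := exists_nat_one_div_lt hε
  have hyQ : y ∈ Q n k := ⟨x, hxB, hyP, (ball_subset_ball hk.le).trans hεU,
    fun x' hx' hlt hyx' => wf.not_lt_min {x | x ∈ B ∧ y ∈ U x} ⟨hx', hyx'⟩ hlt⟩
  exact mem_iUnion.2 ⟨(n, k), hyQ⟩

end Localization

section Kernel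

variable {X : Type*} [MetricSpace X] {g : ℝ → ℝ} {h : ℝ}

def NowhereSigmaGPorous (g : ℝ → ℝ) (h : ℝ) (T : Set X) : Prop :=
  ∀ G, IsOpen G → (T ∩ G).Nonempty → ¬SigmaGPorous g h (T ∩ G)

def sigmaGPorousKernel (g : ℝ → ℝ) (h : ℝ) (B : Set X) : Set X :=
  B \ ⋃₀ {U | IsOpen U ∧ SigmaGPorous g h (B ∩ U)}

theorem isGδ_sigmaGPorousKernel {B : Set X} (hB : IsGδ B) :
    IsGδ (sigmaGPorousKernel g h B) :=
  hB.inter (isOpen_sUnion fun _ hU => hU.1).isClosed_compl.isGδ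

theorem sigmaGPorous_diff_sigmaGPorousKernel (hh : 0 < h) (hg0 : g 0 = 0)
    (hg : StrictMonoOn g (Ico 0 h)) (B : Set X) :
    SigmaGPorous g h (B \ sigmaGPorousKernel g h B) := by
  rw [sigmaGPorousKernel, sdiff_sdiff_right_self]
  refine sigmaGPorous_of_forall_exists_isOpen hh hg0 hg fun x ⟨_, U, ⟨hUo, hσ⟩, hxU⟩ => ?_
  exact ⟨U, hUo, hxU, hσ.mono (inter_subset_inter_left _ inter_subset_left)⟩

theorem nowhereSigmaGPorous_sigmaGPorousKernel (hh : 0 < h) (hg0 : g 0 = 0)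
    (hg : StrictMonoOn g (Ico 0 h)) (B : Set X) :
    NowhereSigmaGPorous g h (sigmaGPorousKernel g h B) := by
  rintro G hG ⟨x, ⟨_, hx⟩, hxG⟩ hσ
  have hBG : SigmaGPorous g h (B ∩ G) := by
    refine (hσ.union (sigmaGPorous_diff_sigmaGPorousKernel hh hg0 hg B)).mono
      fun y ⟨hyB, hyG⟩ => ?_
    by_cases hy : y ∈ sigmaGPorousKernel g h B
    exacts [Or.inl ⟨hy, hyG⟩, Or.inr ⟨hyB, hy⟩]
  exact hx ⟨G, ⟨hG, hBG⟩, hxG⟩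

theorem exists_nowhereSigmaGPorous_subset (hh : 0 < h) (hg0 : g 0 = 0)
    (hg : StrictMonoOn g (Ico 0 h)) {B : Set X} (hB : IsGδ B) (hσ : ¬SigmaGPorous g h B) :
    ∃ T ⊆ B, T.Nonempty ∧ IsGδ T ∧ NowhereSigmaGPorous g h T := by
  refine ⟨sigmaGPorousKernel g h B, sdiff_subset, nonempty_iff_ne_empty.2 fun hT => hσ ?_,
    isGδ_sigmaGPorousKernel hB, nowhereSigmaGPorous_sigmaGPorousKernel hh hg0 hg B⟩
  simpa only [hT, sdiff_empty] using sigmaGPorous_diff_sigmaGPorousKernel hh hg0 hg B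

/-- `S ∩ G` splits into the porous set of its points at which `S` is porous and the sets
`S ∩ G ∩ (f m)ᶜ`, where `⋂ m, f m` is the `G_δ` set of those points; one of the latter is not
σ-porous, and its kernel is the required set. -/
theorem NowhereSigmaGPorous.exists_subset_forall_not_gporousAt (hh : 0 < h) (hg0 : g 0 = 0)
    (hg : StrictMonoOn g (Ico 0 h)) {S G : Set X} (hS : NowhereSigmaGPorous g h S)
    (hSδ : IsGδ S) (hG : IsOpen G) (hSG : (S ∩ G).Nonempty) :
    ∃ T ⊆ S ∩ G, (T.Nonempty ∧ IsGδ T ∧ NowhereSigmaGPorous g h T) ∧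
      ∀ x ∈ T, ¬GPorousAt g h S x := by
  obtain ⟨f, hfo, hf⟩ := (isGδ_setOf_gporousAt (g := g) (h := h) S).eq_iInter_nat
  have hporous : GPorous g h (S ∩ G ∩ ⋂ m, f m) := by
    rw [← hf]
    exact fun x hx => hx.2.mono (inter_subset_left.trans inter_subset_left)
  obtain ⟨m, hm⟩ : ∃ m, ¬SigmaGPorous g h (S ∩ G ∩ (f m)ᶜ) := by
    by_contra! hall
    refine hS G hG hSG ((hporous.sigmaGPorous.union (.iUnion hall)).mono fun x hx => ?_)
    by_cases hxf : ∀ m, x ∈ f m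
    exacts [Or.inl ⟨hx, mem_iInter.2 hxf⟩,
      Or.inr (mem_iUnion.2 ((not_forall.1 hxf).imp fun m hm => ⟨hx, hm⟩))]
  obtain ⟨T, hT, hTprop⟩ := exists_nowhereSigmaGPorous_subset hh hg0 hg
    ((hSδ.inter hG.isGδ).inter (hfo m).isClosed_compl.isGδ) hm
  refine ⟨T, hT.trans inter_subset_left, hTprop, fun x hx hxS => (hT hx).2 ?_⟩
  exact mem_iInter.1 (hf ▸ hxS : x ∈ ⋂ m, f m) m

theorem isForanSystem_setOf_nowhereSigmaGPorous (hh : 0 < h) (hg0 : g 0 = 0)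
    (hg : StrictMonoOn g (Ico 0 h)) {S : Set X}
    (hS : S.Nonempty ∧ IsGδ S ∧ NowhereSigmaGPorous g h S) :
    IsForanSystem g h {T : Set X | T.Nonempty ∧ IsGδ T ∧ NowhereSigmaGPorous g h T} := by
  refine ⟨⟨S, hS⟩, fun T hT => ⟨hT.1, hT.2.1⟩, fun T hT G hG hTG => ?_⟩
  obtain ⟨T', hT', hT'mem, hnp⟩ :=
    hT.2.2.exists_subset_forall_not_gporousAt hh hg0 hg hT.2.1 hG hTG
  exact ⟨T', hT'mem, hT', hnp⟩

end Kernel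

theorem exists_tendsto_of_forall_mem_ball_pow {Y : Type*} [PseudoMetricSpace Y]
    [CompleteSpace Y] {u : ℕ → Y} (hu : ∀ n l, n ≤ l → u l ∈ ball (u n) ((1 / 2) ^ n)) :
    ∃ y, Tendsto u atTop (𝓝 y) := by
  refine cauchySeq_tendsto_of_complete (Metric.cauchySeq_iff'.2 fun ε hε => ?_)
  obtain ⟨N, hN⟩ := exists_pow_lt_of_lt_one hε one_half_lt_one
  exact ⟨N, fun n hn => (mem_ball.1 (hu N n hn)).trans hN⟩

/-- `U n x` is the `(1/2)^n`-ball around `x` for a complete metric inducing the topology. -/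
theorem TopComplete.exists_nhds_tendsto {X : Type*} [MetricSpace X] (hX : TopComplete X) :
    ∃ U : ℕ → X → Set X, (∀ n x, U n x ∈ 𝓝 x) ∧
      ∀ u : ℕ → X, (∀ n l, n ≤ l → u l ∈ U n (u n)) → ∃ y, Tendsto u atTop (𝓝 y) := by
  obtain ⟨m, htop, hcomp⟩ := hX
  refine ⟨fun n x => @ball X m.toPseudoMetricSpace x ((1 / 2) ^ n), fun n x => ?_,
    fun u hu => ?_⟩
  · have := @ball_mem_nhds X m.toPseudoMetricSpace x _ (by positivity : (0 : ℝ) < (1 / 2) ^ n)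
    rwa [htop] at this
  · have := @exists_tendsto_of_forall_mem_ball_pow X m.toPseudoMetricSpace hcomp u hu
    rwa [htop] at this

/-- A stage of the nested construction. The open sets `W k` with `S = ⋂ k, W k` are intersected
at each step with a `G_δ` presentation of the new member, so that the limit point ends up in
every member chosen along the way. -/
structure ForanStage (X : Type*) where
  S : Set X
  x : X
  r : ℝ
  W : ℕ → Set X

namespace ForanStage

variable {X : Type*} [MetricSpace X] {g : ℝ → ℝ} {h : ℝ}

structure Valid (F : Set (Set X)) (s : ForanStage X) : Prop where
  mem : s.S ∈ F
  x_mem : s.x ∈ s.S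
  r_pos : 0 < s.r
  isOpen_W : ∀ k, IsOpen (s.W k)
  S_eq : s.S = ⋂ k, s.W k

structure IsSucc (g : ℝ → ℝ) (h : ℝ) (U : ℕ → X → Set X) (B : ℕ → Set X) (n : ℕ)
    (s t : ForanStage X) : Prop where
  not_gporousAt : ∀ z ∈ t.S, ¬GPorousAt g h s.S z
  W_subset : ∀ k, t.W k ⊆ s.W k
  closedBall_subset_W : ∀ k ≤ n, closedBall t.x t.r ⊆ t.W k
  closedBall_subset_ball : closedBall t.x t.r ⊆ ball s.x s.r
  closedBall_subset_U : closedBall t.x t.r ⊆ U n t.x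
  disjoint_or_subset_closure :
    closedBall t.x t.r ∩ B n = ∅ ∨ s.S ∩ ball s.x s.r ⊆ closure (B n)

theorem Valid.exists_refine {F : Set (Set X)} (hF : IsForanSystem g h F) {s : ForanStage X}
    (hs : s.Valid F) {N : X → Set X} (hN : ∀ x, N x ∈ 𝓝 x) (n : ℕ) {G : Set X} (hG : IsOpen G)
    (hSG : (s.S ∩ G).Nonempty) :
    ∃ t : ForanStage X, t.Valid F ∧ (∀ z ∈ t.S, ¬GPorousAt g h s.S z) ∧
      (∀ k, t.W k ⊆ s.W k) ∧ (∀ k ≤ n, closedBall t.x t.r ⊆ t.W k) ∧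
      closedBall t.x t.r ⊆ G ∩ N t.x := by
  obtain ⟨T, hTF, hTSG, hT⟩ := hF.2.2 s.S hs.mem G hG hSG
  obtain ⟨x, hx⟩ := (hF.2.1 T hTF).1
  obtain ⟨f, hfo, hTf⟩ := (hF.2.1 T hTF).2.eq_iInter_nat
  have hTS : T ⊆ s.S := fun z hz => (hTSG hz).1
  have hWo (k : ℕ) : IsOpen (s.W k ∩ f k) := (hs.isOpen_W k).inter (hfo k)
  have hxW (k : ℕ) : x ∈ s.W k ∩ f k :=
    ⟨mem_iInter.1 (hs.S_eq ▸ hTS hx) k, mem_iInter.1 (hTf ▸ hx) k⟩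
  have hO : G ∩ ⋂ k ∈ {k | k ≤ n}, (s.W k ∩ f k) ∈ 𝓝 x :=
    (hG.inter ((finite_le_nat n).isOpen_biInter fun k _ => hWo k)).mem_nhds
      ⟨(hTSG hx).2, mem_biInter fun k _ => hxW k⟩
  obtain ⟨r, hr, hrO⟩ := nhds_basis_closedBall.mem_iff.1 (inter_mem hO (hN x))
  refine ⟨⟨T, x, r, fun k => s.W k ∩ f k⟩, ⟨hTF, hx, hr, hWo, ?_⟩, hT,
    fun k => inter_subset_left, fun k hk z hz => mem_iInter₂.1 (hrO hz).1.2 k hk,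
    fun z hz => ⟨(hrO hz).1.1, (hrO hz).2⟩⟩
  rw [iInter_inter_distrib, ← hs.S_eq, ← hTf]
  exact (inter_eq_right.2 hTS).symm

theorem Valid.exists_isSucc {F : Set (Set X)} (hF : IsForanSystem g h F) {s : ForanStage X}
    (hs : s.Valid F) {U : ℕ → X → Set X} (hU : ∀ n x, U n x ∈ 𝓝 x) (B : ℕ → Set X) (n : ℕ) :
    ∃ t : ForanStage X, t.Valid F ∧ IsSucc g h U B n s t := by
  by_cases hc : (s.S ∩ (ball s.x s.r \ closure (B n))).Nonempty
  · obtain ⟨t, ht, hp, hW, hWn, hG⟩ :=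
      hs.exists_refine hF (hU n) n (isOpen_ball.sdiff isClosed_closure) hc
    refine ⟨t, ht, hp, hW, hWn, fun z hz => (hG hz).1.1, fun z hz => (hG hz).2, Or.inl ?_⟩
    exact subset_empty_iff.1 fun z ⟨hz, hzB⟩ => (hG hz).1.2 (subset_closure hzB)
  · obtain ⟨t, ht, hp, hW, hWn, hG⟩ :=
      hs.exists_refine hF (hU n) n isOpen_ball ⟨s.x, hs.x_mem, mem_ball_self hs.r_pos⟩
    refine ⟨t, ht, hp, hW, hWn, fun z hz => (hG hz).1, fun z hz => (hG hz).2, Or.inr ?_⟩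
    exact fun z hz => by_contra fun hzB => hc ⟨z, hz.1, hz.2, hzB⟩

theorem exists_forall_mem_of_isSucc {F : Set (Set X)} {U : ℕ → X → Set X}
    (hU : ∀ u : ℕ → X, (∀ n l, n ≤ l → u l ∈ U n (u n)) → ∃ y, Tendsto u atTop (𝓝 y))
    {B : ℕ → Set X} {s : ℕ → ForanStage X} (hv : ∀ n, (s n).Valid F)
    (hs : ∀ n, (s n).IsSucc g h U B n (s (n + 1))) :
    ∃ y, ∀ n, y ∈ (s n).S ∧ y ∈ closedBall (s (n + 1)).x (s (n + 1)).r := by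
  have hball : Antitone fun n => closedBall (s n).x (s n).r :=
    antitone_nat_of_succ_le fun n => (hs n).closedBall_subset_ball.trans ball_subset_closedBall
  have hW (k : ℕ) : Antitone fun n => (s n).W k :=
    antitone_nat_of_succ_le fun n => (hs n).W_subset k
  have hx (n : ℕ) : (s n).x ∈ closedBall (s n).x (s n).r := mem_closedBall_self (hv n).r_pos.le
  obtain ⟨y, hy⟩ := hU (fun n => (s (n + 1)).x) fun n l hnl =>
    (hs n).closedBall_subset_U (hball (by omega : n + 1 ≤ l + 1) (hx (l + 1)))
  have hyball (n : ℕ) : y ∈ closedBall (s n).x (s n).r :=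
    isClosed_closedBall.mem_of_tendsto hy
      (eventually_atTop.2 ⟨n, fun l hl => hball (by omega : n ≤ l + 1) (hx (l + 1))⟩)
  refine ⟨y, fun n => ⟨?_, hyball (n + 1)⟩⟩
  rw [(hv n).S_eq]
  exact mem_iInter.2 fun k => hW k (by omega : n ≤ max n k + 1)
    ((hs (max n k)).closedBall_subset_W k (le_max_right _ _) (hyball _))

end ForanStage

/-- The nested construction: members `S n` of the system with shrinking balls are chosen so
that `S (n + 1)` avoids the porosity points of `S n`, and either the ball of stage `n + 1`
misses `B n` or `S n` is locally inside `closure (B n)`. A common point `y` of all `S n` lies in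
some `B N`; the first alternative fails at `y`, and the second makes `S N` porous at `y`. -/
theorem IsForanSystem.not_sigmaGPorous {X : Type*} [MetricSpace X] {g : ℝ → ℝ} {h : ℝ}
    (hX : TopComplete X) (hh : 0 < h) (hg0 : g 0 = 0) (hg : StrictMonoOn g (Ico 0 h))
    {F : Set (Set X)} (hF : IsForanSystem g h F) {S : Set X} (hS : S ∈ F) :
    ¬SigmaGPorous g h S := by
  rintro ⟨B, hB, hSB⟩
  obtain ⟨U, hU, hconv⟩ := hX.exists_nhds_tendsto
  obtain ⟨x₀, hx₀⟩ := (hF.2.1 S hS).1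
  obtain ⟨f, hfo, hSf⟩ := (hF.2.1 S hS).2.eq_iInter_nat
  choose! next hnext_valid hnext using
    fun (s : ForanStage X) (hs : s.Valid F) (n : ℕ) => hs.exists_isSucc hF hU B n
  let s (n : ℕ) : ForanStage X := Nat.rec ⟨S, x₀, 1, f⟩ (fun n t => next t n) n
  have hv (n : ℕ) : (s n).Valid F := by
    induction n with
    | zero => exact ⟨hS, hx₀, one_pos, hfo, hSf⟩
    | succ n ih => exact hnext_valid _ ih n
  obtain ⟨y, hy⟩ := ForanStage.exists_forall_mem_of_isSucc hconv hv fun n => hnext _ (hv n) n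
  obtain ⟨N, hyN⟩ := mem_iUnion.1 (hSB ▸ (hy 0).1 : y ∈ ⋃ n, B n)
  have hsucc := hnext _ (hv N) N
  rcases hsucc.disjoint_or_subset_closure with hdisj | hdense
  · exact hdisj.subset ⟨(hy N).2, hyN⟩
  · refine hsucc.not_gporousAt y (hy (N + 1)).1 ((hB N y hyN).closure.of_inter_subset hh hg0 hg
      (isOpen_ball.mem_nhds ?_) hdense)
    exact hsucc.closedBall_subset_ball (hy N).2

theorem not_sigmaGPorous_iff_contains_foran_member_general {X : Type*} [MetricSpace X]
    (hX : TopComplete X) (A : Set X) (hGδ : IsGδ A)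
    (g : ℝ → ℝ) (h : ℝ) (hh : 0 < h) (hg0 : g 0 = 0) (hg : StrictMonoOn g (Set.Ico 0 h)) :
    ¬ SigmaGPorous g h A ↔ ∃ (F : Set (Set X)) (S : Set X),
      IsForanSystem g h F ∧ S ∈ F ∧ S ⊆ A := by
  constructor
  · intro hA
    obtain ⟨S, hSA, hS⟩ := exists_nowhereSigmaGPorous_subset hh hg0 hg hGδ hA
    exact ⟨_, S, isForanSystem_setOf_nowhereSigmaGPorous hh hg0 hg hS, hS, hSA⟩
  · rintro ⟨F, S, hF, hSF, hSA⟩ hA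
    exact hF.not_sigmaGPorous hX hh hg0 hg hSF (hA.mono hSA)

/-- Converse of the Foran lemma: a nonempty `G_δ` subset of a topologically complete metric
space is not σ-`⟨g⟩`-porous iff it contains a member of some Foran system for
`⟨g⟩`-porosity. -/
theorem not_sigmaGPorous_iff_contains_foran_member {X : Type*} [MetricSpace X]
    (hX : TopComplete X) (A : Set X) (hA : A.Nonempty) (hGδ : IsGδ A)
    (g : ℝ → ℝ) (h : ℝ) (hh : 0 < h) (hg0 : g 0 = 0) (hg : StrictMonoOn g (Set.Ico 0 h)) :
    ¬ SigmaGPorous g h A ↔ ∃ (F : Set (Set X)) (S : Set X),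
      IsForanSystem g h F ∧ S ∈ F ∧ S ⊆ A :=
  not_sigmaGPorous_iff_contains_foran_member_general hX A hGδ g h hh hg0 hg
end

section
/- Let X be a topologically complete metric space and let A ⊆ X be a Suslin set. Then for every separable subset S₀ ⊆ X there exists a closed separable set Y ⊆ X with S₀ ⊆ Y such that A is σ-upper porous in X if and only if A ∩ Y is σ-upper porous in the metric subspace Y. -/
open Metric Filter Set Topology TopologicalSpace NNReal ENNReal

lemma le_porosityGamma {X : Type*} [MetricSpace X] {A : Set X} {x : X} {R : ℝ} {r : ℝ≥0}
    (h : ∃ z : X, Metric.ball z (r : ℝ) ⊆ Metric.ball x R \ A) :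
    (r : ℝ≥0∞) ≤ porosityGamma A x R :=
  le_iSup₂ (f := fun (r : ℝ≥0) (_ : ∃ z : X, Metric.ball z (r : ℝ) ⊆ Metric.ball x R \ A)
    => (r : ℝ≥0∞)) r h

/-- Construction lemma for `UpperPorousAt`. -/
lemma upperPorousAt_of_forall {X : Type*} [MetricSpace X] {A : Set X} {x : X} {c : ℝ≥0}
    (hc : 0 < c)
    (h : ∀ δ > (0:ℝ), ∃ R, 0 < R ∧ R < δ ∧ ∃ r : ℝ≥0, (c:ℝ) * R ≤ (r:ℝ) ∧
        ∃ z : X, Metric.ball z (r:ℝ) ⊆ Metric.ball x R \ A) :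
    UpperPorousAt A x := by
  have hfreq : ∃ᶠ R in 𝓝[>] (0:ℝ),
      (c : ℝ≥0∞) ≤ porosityGamma A x R / ENNReal.ofReal R := by
    rw [(nhdsGT_basis (0:ℝ)).frequently_iff]
    intro δ hδ
    obtain ⟨R, hR0, hRδ, r, hcr, hz⟩ := h δ hδ
    refine ⟨R, ⟨hR0, hRδ⟩, ?_⟩
    rw [ENNReal.le_div_iff_mul_le (Or.inl (by simp [hR0])) (Or.inl (by simp))]
    calc (c : ℝ≥0∞) * ENNReal.ofReal R = ENNReal.ofReal ((c:ℝ) * R) := by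
          rw [ENNReal.ofReal_mul c.coe_nonneg, ENNReal.ofReal_coe_nnreal]
      _ ≤ (r : ℝ≥0∞) := by
          rw [← ENNReal.ofReal_coe_nnreal]; exact ENNReal.ofReal_le_ofReal hcr
      _ ≤ porosityGamma A x R := le_porosityGamma hz
  have := le_limsup_of_frequently_le hfreq
  exact lt_of_lt_of_le (by exact_mod_cast hc) this

/-- Extraction lemma from `UpperPorousAt`. -/
lemma exists_of_upperPorousAt {X : Type*} [MetricSpace X] {A : Set X} {x : X}
    (h : UpperPorousAt A x) :
    ∃ c : ℝ≥0, 0 < c ∧ c ≤ 1 ∧ ∀ δ > (0:ℝ), ∃ R, 0 < R ∧ R < δ ∧ ∃ r : ℝ≥0,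
      (c:ℝ) * R < (r:ℝ) ∧ ∃ z : X, Metric.ball z (r:ℝ) ⊆ Metric.ball x R \ A := by
  obtain ⟨c₀, hc₀0, hc₀⟩ := exists_between h
  have hc₀top : c₀ ≠ ⊤ := (hc₀.trans_le le_top).ne
  set c : ℝ≥0 := min 1 c₀.toNNReal with hc
  have hcpos : 0 < c := lt_min one_pos (ENNReal.toNNReal_pos hc₀0.ne' hc₀top)
  have hcle : (c : ℝ≥0∞) ≤ c₀ := by
    calc (c:ℝ≥0∞) ≤ (c₀.toNNReal : ℝ≥0∞) := by exact_mod_cast min_le_right _ _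
      _ = c₀ := ENNReal.coe_toNNReal hc₀top
  refine ⟨c, hcpos, min_le_left _ _, ?_⟩
  have hfreq := frequently_lt_of_lt_limsup (by isBoundedDefault) hc₀
  rw [(nhdsGT_basis (0:ℝ)).frequently_iff] at hfreq
  intro δ hδ
  obtain ⟨R, ⟨hR0, hRδ⟩, hlt⟩ := hfreq δ hδ
  refine ⟨R, hR0, hRδ, ?_⟩
  have hlt' : (c : ℝ≥0∞) * ENNReal.ofReal R < porosityGamma A x R := by
    have := lt_of_le_of_lt hcle hlt
    rwa [ENNReal.lt_div_iff_mul_lt (Or.inl (by simp [hR0])) (Or.inl (by simp))] at this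
  rw [porosityGamma, lt_iSup_iff] at hlt'
  obtain ⟨r, hr⟩ := hlt'
  by_cases hP : ∃ z : X, Metric.ball z (r : ℝ) ⊆ Metric.ball x R \ A
  · rw [iSup_pos hP] at hr
    refine ⟨r, ?_, hP⟩
    have : ENNReal.ofReal ((c:ℝ) * R) < ENNReal.ofReal (r:ℝ) := by
      rwa [ENNReal.ofReal_mul c.coe_nonneg, ENNReal.ofReal_coe_nnreal,
        ENNReal.ofReal_coe_nnreal]
    exact (ENNReal.ofReal_lt_ofReal_iff_of_nonneg (by positivity)).mp this
  · rw [iSup_neg hP] at hr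
    exact absurd hr (by simp)

/-- Easy direction, pointwise: porosity in the subspace gives porosity in `X`. -/
lemma upperPorousAt_image {X : Type*} [MetricSpace X] {Y : Set X} {B : Set Y} {x : Y}
    (hx : x ∈ B) (h : UpperPorousAt B x) : UpperPorousAt (Subtype.val '' B) (x : X) := by
  obtain ⟨c, hc0, hc1, hmain⟩ := exists_of_upperPorousAt h
  refine upperPorousAt_of_forall (c := c / 2) (by positivity) ?_
  intro δ hδ
  obtain ⟨R, hR0, hRδ, r, hcr, z, hz⟩ := hmain (δ / 2) (by linarith)
  have hr0 : (0:ℝ) < r := lt_of_le_of_lt (by positivity) hcr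
  have hzmem : (z : Y) ∈ Metric.ball x R \ B := hz (mem_ball_self hr0)
  have hdzx : dist (z : X) (x : X) < R := by
    have := hzmem.1; rwa [mem_ball, Subtype.dist_eq] at this
  have hrR : (r : ℝ) ≤ dist (x : X) (z : X) := by
    by_contra hcon
    push_neg at hcon
    exact (hz (by rwa [mem_ball, Subtype.dist_eq])).2 hx
  have hrR' : (r : ℝ) < R := lt_of_le_of_lt hrR (by rwa [dist_comm] at hdzx)
  refine ⟨R + r, by positivity, by linarith, r, ?_, (z : X), ?_⟩
  · push_cast
    nlinarith [c.coe_nonneg, mul_le_mul_of_nonneg_left hrR'.le c.coe_nonneg]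
  intro w hw
  rw [mem_ball] at hw
  constructor
  · rw [mem_ball]
    calc dist w (x:X) ≤ dist w (z:X) + dist (z:X) (x:X) := dist_triangle _ _ _
      _ < r + R := by linarith
      _ = R + r := by ring
  · rintro ⟨w', hw'B, rfl⟩
    have : w' ∈ Metric.ball z (r:ℝ) := by rw [mem_ball, Subtype.dist_eq]; exact hw
    exact (hz this).2 hw'B

/-- Hard direction, pointwise: porosity in `X` transfers to a suitable subspace `Y`. -/
lemma upperPorousAt_preimage {X : Type*} [MetricSpace X] {A Y cs : Set X} {B : Set X}
    (hAc : A ⊆ closure cs) (hAY : A ⊆ Y)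
    (hw : ∀ a ∈ cs, ∀ Rq ρ : ℚ, (∃ z : X, dist z a < (Rq:ℝ) ∧ ∀ y ∈ A, (ρ:ℝ) ≤ dist z y) →
        ∃ v ∈ Y, dist v a < (Rq:ℝ) ∧ ∀ y ∈ A, (ρ:ℝ) ≤ dist v y)
    (hBA : B ⊆ A) {x : X} (hx : x ∈ B) (hxY : x ∈ Y) (h : UpperPorousAt B x) :
    UpperPorousAt ((Subtype.val ⁻¹' B) : Set Y) ⟨x, hxY⟩ := by
  obtain ⟨c, hc0, hc1, hmain⟩ := exists_of_upperPorousAt h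
  have hc0' : (0:ℝ) < c := hc0
  have hc1' : (c:ℝ) ≤ 1 := hc1
  refine upperPorousAt_of_forall (c := c / 8) (by positivity) ?_
  intro δ hδ
  obtain ⟨R, hR0, hRδ, r, hcr, z, hz⟩ := hmain (δ / 2) (by linarith)
  have hr0 : (0:ℝ) < r := lt_of_le_of_lt (by positivity) hcr
  have hzmem : z ∈ Metric.ball x R \ B := hz (mem_ball_self hr0)
  have hdzx : dist z x < R := hzmem.1
  have hrR : (r : ℝ) ≤ dist x z := by
    by_contra hcon
    push_neg at hcon
    exact (hz (by rwa [mem_ball])).2 hx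
  have hrR' : (r : ℝ) < R := lt_of_le_of_lt hrR (by rwa [dist_comm] at hdzx)
  -- the common large scale
  set R'' : ℝ := (1 + (c:ℝ)) * R with hR''def
  have hR''0 : 0 < R'' := by positivity
  have hR''2 : R'' ≤ 2 * R := by nlinarith
  have hR''δ : R'' < δ := by nlinarith
  refine ⟨R'', hR''0, hR''δ, ?_⟩
  by_cases hclose : ∃ y ∈ A, dist z y < (r:ℝ) / 2
  · -- there is a point of A (hence of Y) in the middle of the hole
    obtain ⟨a', ha'A, ha'⟩ := hclose
    refine ⟨r / 2, ?_, ⟨a', hAY ha'A⟩, ?_⟩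
    · push_cast
      nlinarith
    · rintro ⟨y, hyY⟩ hy
      rw [mem_ball, Subtype.dist_eq] at hy
      push_cast at hy
      have hyz : dist y z < (r:ℝ) := by
        calc dist y z ≤ dist y a' + dist a' z := dist_triangle _ _ _
          _ < (r:ℝ)/2 + (r:ℝ)/2 := by
              have h2 : dist a' z = dist z a' := dist_comm _ _
              linarith
          _ = r := by ring
      have := hz (by rwa [mem_ball])
      constructor
      · rw [mem_ball, Subtype.dist_eq]
        have : dist y x < R := this.1
        simp only []
        calc dist y x < R := this
          _ ≤ R'' := by nlinarith
      · exact fun hmem => this.2 hmem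
  · -- the hole is far from A; use a witness point of Y
    push_neg at hclose
    obtain ⟨ρ, hρ1, hρ2⟩ := exists_rat_btwn (show (c:ℝ)*R/4 < (c:ℝ)*R/2 by nlinarith)
    have hρpos : (0:ℝ) < ρ := lt_trans (by positivity) hρ1
    have hρr : (ρ:ℝ) < (r:ℝ)/2 := by linarith
    obtain ⟨Rq, hRq1, hRq2⟩ := exists_rat_btwn
      (show R + (c:ℝ)*R/100 < R + (c:ℝ)*R/50 by nlinarith)
    obtain ⟨a, hac, hax⟩ := Metric.mem_closure_iff.1 (hAc (hBA hx)) ((c:ℝ)*R/100) (by positivity)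
    have hcond : ∃ z₀ : X, dist z₀ a < (Rq:ℝ) ∧ ∀ y ∈ A, (ρ:ℝ) ≤ dist z₀ y := by
      refine ⟨z, ?_, fun y hy => le_trans hρr.le (hclose y hy)⟩
      calc dist z a ≤ dist z x + dist x a := dist_triangle _ _ _
        _ < R + (c:ℝ)*R/100 := by linarith
        _ < Rq := hRq1
    obtain ⟨v, hvY, hva, hvfar⟩ := hw a hac Rq ρ hcond
    refine ⟨Real.toNNReal (ρ:ℝ), ?_, ⟨v, hvY⟩, ?_⟩
    · rw [Real.coe_toNNReal _ hρpos.le]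
      push_cast
      nlinarith
    · rintro ⟨y, hyY⟩ hy
      rw [mem_ball, Subtype.dist_eq, Real.coe_toNNReal _ hρpos.le] at hy
      have hy' : dist y v < (ρ:ℝ) := hy
      have hyA : y ∉ A := fun hyA => absurd hy' (not_lt.2 (by
        have := hvfar y hyA; rwa [dist_comm] at this))
      constructor
      · rw [mem_ball, Subtype.dist_eq]
        calc dist y x ≤ dist y v + dist v a + dist a x := dist_triangle4 _ _ _ _
          _ < (ρ:ℝ) + (Rq:ℝ) + (c:ℝ)*R/100 := by
              have h2 : dist a x = dist x a := dist_comm _ _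
              linarith
          _ < R'' := by rw [hR''def]; nlinarith
      · exact fun hmem => hyA (hBA hmem)

lemma analyticSet_isSeparable {X : Type*} [MetricSpace X] {A : Set X}
    (hA : MeasureTheory.AnalyticSet A) : IsSeparable A := by
  rw [MeasureTheory.AnalyticSet] at hA
  rcases hA with h | ⟨f, hfc, hfr⟩
  · rw [h]; exact countable_empty.isSeparable
  · rw [← hfr]; exact isSeparable_range hfc

/-- σ-upper porosity of Suslin sets in topologically complete metric spaces is separably
determined. -/
theorem sigmaUpperPorous_separably_determined_metric {X : Type*} [MetricSpace X]
    (hX : TopComplete X) (A : Set X) (hA : MeasureTheory.AnalyticSet A)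
    (S₀ : Set X) (hS₀ : TopologicalSpace.IsSeparable S₀) :
    ∃ Y : Set X, IsClosed Y ∧ TopologicalSpace.IsSeparable Y ∧ S₀ ⊆ Y ∧
      (SigmaUpperPorous A ↔ SigmaUpperPorous ((Subtype.val ⁻¹' A) : Set Y)) := by
  classical
  have hAsep := analyticSet_isSeparable hA
  obtain ⟨cs, hcs_count, hcs⟩ := id hAsep
  -- witness set
  let P : X → ℚ → ℚ → Prop := fun a Rq ρ =>
    ∃ z : X, dist z a < (Rq:ℝ) ∧ ∀ y ∈ A, (ρ:ℝ) ≤ dist z y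
  let w : X → ℚ → ℚ → X := fun a Rq ρ => if h : P a Rq ρ then h.choose else a
  let W : Set X := ⋃ a ∈ cs, Set.range (fun p : ℚ × ℚ => w a p.1 p.2)
  have hWcount : W.Countable :=
    hcs_count.biUnion (fun a _ => countable_range _)
  refine ⟨closure (S₀ ∪ A ∪ W), isClosed_closure,
    (((hS₀.union hAsep).union hWcount.isSeparable)).closure,
    subset_closure.trans' (by intro s hs; exact Or.inl (Or.inl hs)), ?_⟩
  set Y : Set X := closure (S₀ ∪ A ∪ W) with hYdef
  have hAY : A ⊆ Y := subset_closure.trans' (fun a ha => Or.inl (Or.inr ha))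
  have hWY : W ⊆ Y := subset_closure.trans' (fun a ha => Or.inr ha)
  have hwitness : ∀ a ∈ cs, ∀ Rq ρ : ℚ,
      (∃ z : X, dist z a < (Rq:ℝ) ∧ ∀ y ∈ A, (ρ:ℝ) ≤ dist z y) →
      ∃ v ∈ Y, dist v a < (Rq:ℝ) ∧ ∀ y ∈ A, (ρ:ℝ) ≤ dist v y := by
    intro a hac Rq ρ hP
    refine ⟨w a Rq ρ, hWY ?_, ?_⟩
    · exact mem_biUnion hac ⟨(Rq, ρ), rfl⟩
    · have : w a Rq ρ = (hP : P a Rq ρ).choose := dif_pos hP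
      rw [this]
      exact hP.choose_spec
  constructor
  · -- hard direction
    rintro ⟨B, hBpor, hBun⟩
    refine ⟨fun n => (Subtype.val ⁻¹' (B n) : Set Y), ?_, by rw [hBun, preimage_iUnion]⟩
    intro n x hxB
    have hxBn : (x : X) ∈ B n := hxB
    have hBnA : B n ⊆ A := hBun ▸ subset_iUnion B n
    have := upperPorousAt_preimage hcs hAY hwitness hBnA hxBn x.2 (hBpor n _ hxBn)
    convert this using 2
  · -- easy direction
    rintro ⟨B', hBpor, hBun⟩
    refine ⟨fun n => Subtype.val '' (B' n), ?_, ?_⟩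
    · rintro n x ⟨x', hx'B, rfl⟩
      exact upperPorousAt_image hx'B (hBpor n _ hx'B)
    · have : Subtype.val '' ((Subtype.val ⁻¹' A : Set Y)) = A := by
        rw [Subtype.image_preimage_coe]
        exact inter_eq_self_of_subset_right hAY
      rw [← this, hBun, image_iUnion]
end

section
/- Let X be a metric space, let g be a porosity function and let A ⊆ X. Then for every separable subset S₀ ⊆ X there exists a closed separable set Y ⊆ X with S₀ ⊆ Y such that: (a) for every x ∈ Y, if A is not ⟨g⟩-porous at x in X, then A ∩ Y is not ⟨g⟩-porous at x in the metric subspace Y; and (b) if A is not ⟨g⟩-porous in X, then A ∩ Y is not ⟨g⟩-porous in Y. -/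
open Metric Filter Set Topology TopologicalSpace NNReal ENNReal

/-- Separable reduction of non-`⟨g⟩`-porosity (pointwise and global). -/
lemma exists_good_set {X : Type*} [MetricSpace X] (A S : Set X)
    (hS : TopologicalSpace.IsSeparable S) :
    ∃ Y : Set X, IsClosed Y ∧ TopologicalSpace.IsSeparable Y ∧ S ⊆ Y ∧
      ∀ c ∈ Y, ∀ r : ℝ, (Metric.ball c r ∩ A).Nonempty →
        (Metric.ball c r ∩ A ∩ Y).Nonempty := by
  classical
  obtain ⟨c₀, hc₀count, hc₀⟩ := hS
  set f : X → ℚ → X := fun c q =>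
    if hne : (Metric.ball c (q : ℝ) ∩ A).Nonempty then hne.choose else c with hf
  have hfmem : ∀ (c : X) (q : ℚ), (Metric.ball c (q : ℝ) ∩ A).Nonempty →
      f c q ∈ Metric.ball c (q : ℝ) ∩ A := by
    intro c q hne
    simp only [hf, dif_pos hne]
    exact hne.choose_spec
  let D : ℕ → Set X := fun n =>
    Nat.rec c₀ (fun _ Dn => Dn ∪ (fun p : X × ℚ => f p.1 p.2) '' (Dn ×ˢ Set.univ)) n
  have hD0 : D 0 = c₀ := rfl
  have hDsucc : ∀ n, D (n + 1) = D n ∪ (fun p : X × ℚ => f p.1 p.2) '' (D n ×ˢ Set.univ) :=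
    fun n => rfl
  have hDc : ∀ n, (D n).Countable := by
    intro n
    induction n with
    | zero => exact hc₀count
    | succ n ih =>
      rw [hDsucc]
      exact ih.union ((ih.prod (Set.countable_univ)).image _)
  set T := ⋃ n, D n with hT
  have hTc : T.Countable := Set.countable_iUnion hDc
  refine ⟨closure T, isClosed_closure, hTc.isSeparable.closure, ?_, ?_⟩
  · refine hc₀.trans (closure_mono ?_)
    rw [← hD0]; exact Set.subset_iUnion D 0
  · intro c hc r ⟨a, haB, haA⟩
    have hdca : dist c a < r := by rwa [Metric.mem_ball, dist_comm] at haB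
    set ε := r - dist c a with hε
    have hεpos : 0 < ε := by simp [hε]; linarith
    obtain ⟨c', hc'T, hcc'⟩ := Metric.mem_closure_iff.mp hc (ε / 2) (by linarith)
    obtain ⟨n, hc'n⟩ := Set.mem_iUnion.mp hc'T
    have hlt : dist c' a < r - dist c c' := by
      have : dist c' a ≤ dist c' c + dist c a := dist_triangle _ _ _
      rw [dist_comm c' c] at this
      linarith
    obtain ⟨q, hq1, hq2⟩ := exists_rat_btwn hlt
    have hane : (Metric.ball c' (q : ℝ) ∩ A).Nonempty :=
      ⟨a, by rw [Metric.mem_ball, dist_comm]; exact hq1, haA⟩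
    obtain ⟨hfB, hfA⟩ := hfmem c' q hane
    have hfD : f c' q ∈ D (n + 1) := by
      rw [hDsucc]
      exact Or.inr ⟨(c', q), ⟨hc'n, trivial⟩, rfl⟩
    refine ⟨f c' q, ⟨?_, hfA⟩, subset_closure (Set.mem_iUnion.mpr ⟨n + 1, hfD⟩)⟩
    rw [Metric.mem_ball] at hfB ⊢
    calc dist (f c' q) c ≤ dist (f c' q) c' + dist c' c := dist_triangle _ _ _
      _ < (q : ℝ) + dist c c' := by rw [dist_comm c' c]; linarith
      _ < r := by linarith

lemma gPorousAt_transfer {X : Type*} [MetricSpace X] (g : ℝ → ℝ) (h : ℝ) (A Y : Set X)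
    (hY : ∀ c ∈ Y, ∀ r : ℝ, (Metric.ball c r ∩ A).Nonempty →
      (Metric.ball c r ∩ A ∩ Y).Nonempty)
    (x : X) (hx : x ∈ Y)
    (hp : GPorousAt g h ((Subtype.val ⁻¹' A) : Set Y) (⟨x, hx⟩ : Y)) :
    GPorousAt g h A x := by
  obtain ⟨c, r, hc, hn⟩ := hp
  refine ⟨fun n => (c n : X), r, (continuous_subtype_val.tendsto _).comp hc, fun n => ?_⟩
  obtain ⟨hr0, hrh, hdisj, hmem⟩ := hn n
  refine ⟨hr0, hrh, ?_, ?_⟩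
  · by_contra hne
    rw [← Ne, ← Set.nonempty_iff_ne_empty] at hne
    obtain ⟨a, ⟨haB, haA⟩, haY⟩ := hY _ (c n).2 _ hne
    have : (⟨a, haY⟩ : Y) ∈ Metric.ball (c n) (r n) ∩ (Subtype.val ⁻¹' A) := by
      refine ⟨?_, haA⟩
      rw [Metric.mem_ball, Subtype.dist_eq]
      rwa [Metric.mem_ball] at haB
    rw [hdisj] at this
    exact this
  · rw [Metric.mem_ball]
    rw [Metric.mem_ball, Subtype.dist_eq] at hmem
    exact hmem

/-- Separable reduction -/
theorem not_gPorous_separable_reduction {X : Type*} [MetricSpace X]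
    (g : ℝ → ℝ) (h : ℝ) (hh : 0 < h) (hg0 : g 0 = 0) (hg : StrictMonoOn g (Set.Ico 0 h))
    (A : Set X) (S₀ : Set X) (hS₀ : TopologicalSpace.IsSeparable S₀) :
    ∃ Y : Set X, IsClosed Y ∧ TopologicalSpace.IsSeparable Y ∧ S₀ ⊆ Y ∧
      (∀ (x : X) (hx : x ∈ Y),
        ¬ GPorousAt g h A x →
          ¬ GPorousAt g h ((Subtype.val ⁻¹' A) : Set Y) (⟨x, hx⟩ : Y)) ∧
      (¬ GPorous g h A → ¬ GPorous g h ((Subtype.val ⁻¹' A) : Set Y)) := by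
  classical
  by_cases hp : GPorous g h A
  · obtain ⟨Y, hYcl, hYsep, hYsub, hYprop⟩ := exists_good_set A S₀ hS₀
    refine ⟨Y, hYcl, hYsep, hYsub, ?_, ?_⟩
    · intro x hx hnx hcon
      exact hnx (gPorousAt_transfer g h A Y hYprop x hx hcon)
    · intro hnp
      exact absurd hp hnp
  · rw [GPorous] at hp
    push_neg at hp
    obtain ⟨x₀, hx₀A, hx₀⟩ := hp
    obtain ⟨Y, hYcl, hYsep, hYsub, hYprop⟩ :=
      exists_good_set A (insert x₀ S₀) (by rw [Set.insert_eq]; exact (Set.countable_singleton x₀).isSeparable.union hS₀)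
    refine ⟨Y, hYcl, hYsep, (Set.subset_insert x₀ S₀).trans hYsub, ?_, ?_⟩
    · intro x hx hnx hcon
      exact hnx (gPorousAt_transfer g h A Y hYprop x hx hcon)
    · intro _ hcon
      have hx₀Y : x₀ ∈ Y := hYsub (Set.mem_insert x₀ S₀)
      exact hx₀ (gPorousAt_transfer g h A Y hYprop x₀ hx₀Y
        (hcon ⟨x₀, hx₀Y⟩ hx₀A))
end

section
/- Let X be a topologically complete metric space, let g be a porosity function and let A ⊆ X. Then for every separable subset S₀ ⊆ X there exists a closed separable set Y ⊆ X with S₀ ⊆ Y such that: if A is a member of some Foran system for ⟨g⟩-porosity in X, then A ∩ Y is a member of some Foran system for ⟨g⟩-porosity in the metric subspace Y. -/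
open Metric Filter Set Topology TopologicalSpace NNReal ENNReal

lemma isGδ_preimage_aux {X Y : Type*} [TopologicalSpace X] [TopologicalSpace Y] {f : X → Y}
    (hf : Continuous f) {S : Set Y} (hS : IsGδ S) : IsGδ (f ⁻¹' S) := by
  obtain ⟨T, hTo, hTc, rfl⟩ := hS
  rw [Set.preimage_sInter]
  exact IsGδ.biInter hTc fun t ht => ((hTo t ht).preimage hf).isGδ

/-- Separable reduction of membership in a Foran system. -/
theorem foran_member_separable_reduction {X : Type*} [MetricSpace X]
    (hX : TopComplete X) (g : ℝ → ℝ) (h : ℝ) (hh : 0 < h) (hg0 : g 0 = 0)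
    (hg : StrictMonoOn g (Set.Ico 0 h)) (A : Set X)
    (S₀ : Set X) (hS₀ : TopologicalSpace.IsSeparable S₀) :
    ∃ Y : Set X, IsClosed Y ∧ TopologicalSpace.IsSeparable Y ∧ S₀ ⊆ Y ∧
      ((∃ F : Set (Set X), IsForanSystem g h F ∧ A ∈ F) →
        ∃ F' : Set (Set Y), IsForanSystem g h F' ∧ ((Subtype.val ⁻¹' A) : Set Y) ∈ F') := by
  classical
  obtain ⟨c₀, hc₀, hS₀c⟩ := hS₀
  by_cases hP : ∃ F : Set (Set X), IsForanSystem g h F ∧ A ∈ F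
  swap
  · exact ⟨closure c₀, isClosed_closure, hc₀.isSeparable.closure, hS₀c,
      fun hp => absurd hp hP⟩
  obtain ⟨F, ⟨hFne, hGδ, hfor⟩, hAF⟩ := hP
  obtain ⟨a, ha⟩ := (hGδ A hAF).1
  have key : ∀ (d : X) (q : ℝ) (S : Set X), ∃ (T : Set X) (p w : X), T ∈ F ∧ p ∈ T ∧
      ((Metric.ball d q ∩ S).Nonempty → S ∈ F →
        T ⊆ S ∩ Metric.ball d q ∧ (∀ x ∈ T, ¬ GPorousAt g h S x) ∧ w ∈ Metric.ball d q ∩ S) := by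
    intro d q S
    by_cases hc : (Metric.ball d q ∩ S).Nonempty ∧ S ∈ F
    · obtain ⟨T, hTF, hTs, hTnp⟩ := hfor S hc.2 (Metric.ball d q) Metric.isOpen_ball
        (by rw [Set.inter_comm]; exact hc.1)
      obtain ⟨p, hp⟩ := (hGδ T hTF).1
      obtain ⟨w, hw⟩ := hc.1
      exact ⟨T, p, w, hTF, hp, fun _ _ => ⟨hTs, hTnp, hw⟩⟩
    · exact ⟨A, a, a, hAF, ha, fun h1 h2 => absurd ⟨h1, h2⟩ hc⟩
  choose Tf pf wf hTfF hpf hspec using key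
  set Q : Set ℝ := Set.range ((↑) : ℚ → ℝ) with hQdef
  set step : Set X × Set (Set X) → Set X × Set (Set X) := fun p =>
    (p.1 ∪ ⋃ d ∈ p.1, ⋃ q ∈ Q, ⋃ S ∈ p.2, {pf d q S, wf d q S},
     p.2 ∪ ⋃ d ∈ p.1, ⋃ q ∈ Q, ⋃ S ∈ p.2, {Tf d q S}) with hstep
  set D : ℕ → Set X := fun n => (step^[n] (insert a c₀, {A})).1 with hD
  set 𝒮 : ℕ → Set (Set X) := fun n => (step^[n] (insert a c₀, {A})).2 with h𝒮
  have hD0 : D 0 = insert a c₀ := rfl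
  have h𝒮0 : 𝒮 0 = {A} := rfl
  have hDsucc : ∀ n, D (n+1) =
      D n ∪ ⋃ d ∈ D n, ⋃ q ∈ Q, ⋃ S ∈ 𝒮 n, {pf d q S, wf d q S} := by
    intro n
    simp only [hD, h𝒮, Function.iterate_succ_apply', hstep]
  have h𝒮succ : ∀ n, 𝒮 (n+1) =
      𝒮 n ∪ ⋃ d ∈ D n, ⋃ q ∈ Q, ⋃ S ∈ 𝒮 n, {Tf d q S} := by
    intro n
    simp only [hD, h𝒮, Function.iterate_succ_apply', hstep]
  have hDm : Monotone D := monotone_nat_of_le_succ fun n => by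
    rw [hDsucc]; exact Set.subset_union_left
  have h𝒮m : Monotone 𝒮 := monotone_nat_of_le_succ fun n => by
    rw [h𝒮succ]; exact Set.subset_union_left
  set Dinf : Set X := ⋃ n, D n with hDinf
  set SS : Set (Set X) := ⋃ n, 𝒮 n with hSSdef
  have hgen : ∀ d ∈ Dinf, ∀ (q : ℚ), ∀ S ∈ SS,
      Tf d q S ∈ SS ∧ pf d q S ∈ Dinf ∧ wf d q S ∈ Dinf := by
    intro d hd q S hS
    obtain ⟨n₁, hd1⟩ := Set.mem_iUnion.1 hd
    obtain ⟨n₂, hS2⟩ := Set.mem_iUnion.1 hS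
    have hdn : d ∈ D (max n₁ n₂) := hDm (le_max_left _ _) hd1
    have hSn : S ∈ 𝒮 (max n₁ n₂) := h𝒮m (le_max_right _ _) hS2
    have hq : ((q : ℝ)) ∈ Q := ⟨q, rfl⟩
    refine ⟨Set.mem_iUnion.2 ⟨max n₁ n₂ + 1, ?_⟩, Set.mem_iUnion.2 ⟨max n₁ n₂ + 1, ?_⟩,
      Set.mem_iUnion.2 ⟨max n₁ n₂ + 1, ?_⟩⟩
    · rw [h𝒮succ]
      exact Set.mem_union_right _
        (Set.mem_biUnion hdn (Set.mem_biUnion hq (Set.mem_biUnion hSn rfl)))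
    · rw [hDsucc]
      exact Set.mem_union_right _
        (Set.mem_biUnion hdn (Set.mem_biUnion hq (Set.mem_biUnion hSn (Set.mem_insert _ _))))
    · rw [hDsucc]
      exact Set.mem_union_right _
        (Set.mem_biUnion hdn (Set.mem_biUnion hq
          (Set.mem_biUnion hSn (Set.mem_insert_of_mem _ rfl))))
  have hSSF : ∀ S ∈ SS, S ∈ F := by
    intro S hS
    obtain ⟨n, hn⟩ := Set.mem_iUnion.1 hS
    clear hS
    induction n with
    | zero => rw [h𝒮0] at hn; exact hn ▸ hAF
    | succ n ih =>
      rw [h𝒮succ] at hn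
      rcases hn with hn | hn
      · exact ih hn
      · simp only [Set.mem_iUnion, Set.mem_singleton_iff] at hn
        obtain ⟨d, _, q, _, S', _, rfl⟩ := hn
        exact hTfF d q S'
  have hSpt : ∀ S ∈ SS, ∃ x ∈ S, x ∈ Dinf := by
    intro S hS
    obtain ⟨n, hn⟩ := Set.mem_iUnion.1 hS
    clear hS
    induction n with
    | zero =>
      rw [h𝒮0] at hn
      exact ⟨a, hn ▸ ha, Set.mem_iUnion.2 ⟨0, hD0 ▸ Set.mem_insert _ _⟩⟩
    | succ n ih =>
      rw [h𝒮succ] at hn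
      rcases hn with hn | hn
      · exact ih hn
      · simp only [Set.mem_iUnion, Set.mem_singleton_iff] at hn
        obtain ⟨d, hd, q, hq, S', hS', rfl⟩ := hn
        refine ⟨pf d q S', hpf d q S', Set.mem_iUnion.2 ⟨n + 1, ?_⟩⟩
        rw [hDsucc]
        exact Set.mem_union_right _
          (Set.mem_biUnion hd (Set.mem_biUnion hq (Set.mem_biUnion hS' (Set.mem_insert _ _))))
  have hcnt : ∀ n, (D n).Countable ∧ (𝒮 n).Countable := by
    intro n
    induction n with
    | zero => exact ⟨(hc₀.insert a), Set.countable_singleton A⟩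
    | succ n ih =>
      constructor
      · rw [hDsucc]
        exact ih.1.union (ih.1.biUnion fun d _ => (Set.countable_range _).biUnion
          fun q _ => ih.2.biUnion fun S _ => (Set.countable_singleton _).insert _)
      · rw [h𝒮succ]
        exact ih.2.union (ih.1.biUnion fun d _ => (Set.countable_range _).biUnion
          fun q _ => ih.2.biUnion fun S _ => Set.countable_singleton _)
  have hDcnt : Dinf.Countable := Set.countable_iUnion fun n => (hcnt n).1
  -- richness
  have hrich : ∀ S ∈ SS, ∀ c ∈ closure Dinf, ∀ r : ℝ,
      (Metric.ball c r ∩ S).Nonempty → ∃ x ∈ Metric.ball c r ∩ S, x ∈ Dinf := by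
    intro S hS c hc r ⟨s, hsb, hsS⟩
    rw [Metric.mem_ball] at hsb
    have hε : 0 < (r - dist s c) / 2 := by linarith
    obtain ⟨d, hdD, hdc⟩ := Metric.mem_closure_iff.1 hc _ hε
    have h1 : dist d s < r - dist c d := by
      have := dist_triangle d c s
      have h2 : dist c s = dist s c := dist_comm c s
      have h3 : dist c d = dist d c := dist_comm c d
      linarith
    obtain ⟨q, hq1, hq2⟩ := exists_rat_btwn h1
    have hne : (Metric.ball d (q : ℝ) ∩ S).Nonempty :=
      ⟨s, Metric.mem_ball.2 (by rw [dist_comm]; exact hq1), hsS⟩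
    obtain ⟨-, -, hw⟩ := hspec d q S hne (hSSF S hS)
    refine ⟨wf d (q : ℝ) S, ⟨Metric.mem_ball.2 ?_, hw.2⟩, ?_⟩
    · have hwb := Metric.mem_ball.1 hw.1
      have := dist_triangle (wf d (q : ℝ) S) d c
      have h3 : dist c d = dist d c := dist_comm c d
      linarith
    · exact (hgen d hdD q S hS).2.2
  -- the space Y
  refine ⟨closure Dinf, isClosed_closure, hDcnt.isSeparable.closure,
    hS₀c.trans (closure_mono ((Set.subset_insert a c₀).trans
      (hD0 ▸ Set.subset_iUnion D 0))), fun _ => ?_⟩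
  set Y : Set X := closure Dinf with hY
  have hASS : A ∈ SS := Set.mem_iUnion.2 ⟨0, h𝒮0 ▸ rfl⟩
  refine ⟨(fun S : Set X => ((Subtype.val ⁻¹' S) : Set Y)) '' SS,
    ⟨⟨_, ⟨A, hASS, rfl⟩⟩, ?_, ?_⟩, ⟨A, hASS, rfl⟩⟩
  · rintro _ ⟨S, hS, rfl⟩
    obtain ⟨x, hxS, hxD⟩ := hSpt S hS
    exact ⟨⟨⟨x, subset_closure hxD⟩, hxS⟩,
      isGδ_preimage_aux continuous_subtype_val (hGδ S (hSSF S hS)).2⟩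
  · rintro _ ⟨S, hS, rfl⟩ G hG ⟨y, hyS, hyG⟩
    obtain ⟨ε, hε, hball⟩ := Metric.isOpen_iff.1 hG y hyG
    have hε3 : 0 < ε / 3 := by linarith
    obtain ⟨d, hdD, hdy⟩ := Metric.mem_closure_iff.1 y.2 _ hε3
    obtain ⟨q, hq1, hq2⟩ := exists_rat_btwn hdy
    have hballne : (Metric.ball d (q : ℝ) ∩ S).Nonempty :=
      ⟨↑y, Metric.mem_ball.2 hq1, hyS⟩
    obtain ⟨hTsub, hTnp, -⟩ := hspec d q S hballne (hSSF S hS)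
    have hTSS := hgen d hdD q S hS
    refine ⟨Subtype.val ⁻¹' (Tf d (q : ℝ) S), ⟨_, hTSS.1, rfl⟩, ?_, ?_⟩
    · rintro z hz
      have h1 := hTsub hz
      refine ⟨h1.1, hball ?_⟩
      rw [Metric.mem_ball, Subtype.dist_eq]
      have h2 := Metric.mem_ball.1 h1.2
      have h3 := dist_triangle (z : X) d (y : X)
      have h4 : dist d (y : X) = dist (y : X) d := dist_comm _ _
      linarith
    · rintro x hx ⟨cs, rs, hcs, hprop⟩
      apply hTnp ↑x hx
      refine ⟨fun n => ↑(cs n), rs, (continuous_subtype_val.tendsto x).comp hcs, fun n => ?_⟩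
      obtain ⟨hr0, hrh, hdisj, hxball⟩ := hprop n
      refine ⟨hr0, hrh, ?_, ?_⟩
      · by_contra hcon
        rw [← Ne, ← Set.nonempty_iff_ne_empty] at hcon
        obtain ⟨w, hw, hwD⟩ := hrich S hS (↑(cs n)) (cs n).2 (rs n) hcon
        have hmem : (⟨w, subset_closure hwD⟩ : Y) ∈
            Metric.ball (cs n) (rs n) ∩ (Subtype.val ⁻¹' S) := by
          refine ⟨?_, hw.2⟩
          rw [Metric.mem_ball, Subtype.dist_eq]
          exact Metric.mem_ball.1 hw.1
        rw [hdisj] at hmem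
        exact hmem
      · rw [Metric.mem_ball] at hxball ⊢
        rw [Subtype.dist_eq] at hxball
        exact hxball
end

section
/- Let X be a metric space, let A ⊆ X and let C ⊆ A be a countable set. Then there exists a closed separable set Y ⊆ X with C ⊆ Y such that for every x ∈ C: if A is not lower porous at x in X, then A ∩ Y is not lower porous at x in the metric subspace Y. -/
open Metric Filter Set Topology TopologicalSpace NNReal ENNReal

/-- `A` is lower porous at `x` if `liminf_{R→0+} γ(x,R,A)/R > 0`. -/
def LowerPorousAt {X : Type*} [MetricSpace X] (A : Set X) (x : X) : Prop :=
  0 < Filter.liminf (fun R : ℝ => porosityGamma A x R / ENNReal.ofReal R) (𝓝[>] (0 : ℝ))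

/-- `A` is lower porous if it is lower porous at each of its points. -/
def LowerPorous {X : Type*} [MetricSpace X] (A : Set X) : Prop :=
  ∀ x ∈ A, LowerPorousAt A x

/-- `A` is σ-lower porous if it is a countable union of lower porous sets. -/
def SigmaLowerPorous {X : Type*} [MetricSpace X] (A : Set X) : Prop :=
  ∃ B : ℕ → Set X, (∀ n, LowerPorous (B n)) ∧ A = ⋃ n, B n

/-! Choose, for every point `z` and rational `q`, a point of `A` in `U(z,q)` whenever there is one,
and close `C` under these countably many choice maps. The closure `Y` of the resulting countable
set keeps the property that every ball centred in `Y` which meets `A` also meets `A ∩ Y`. Hence a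
hole `U_Y(z,r) ⊆ U_Y(x,R) \ A` of the subspace is a hole `U(z,r)` of `X`; since `x ∈ A` forces
`r ≤ d(x,z) < R`, it lies in `U(x,2R)`. So `γ_Y(x,R) ≤ γ(x,2R)`, and the liminf of `γ_Y(x,R)/R` is
at most twice the liminf of `γ(x,R)/R`, which vanishes when `A` is not lower porous at `x`. -/

section

variable {X : Type*} [MetricSpace X]

def BallWitnessed (A Y : Set X) : Prop :=
  ∀ z ∈ Y, ∀ r : ℝ, (ball z r ∩ A).Nonempty → (ball z r ∩ A ∩ Y).Nonempty

theorem exists_countable_ballWitnessed (A : Set X) {C : Set X} (hC : C.Countable) :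
    ∃ S, C ⊆ S ∧ S.Countable ∧ BallWitnessed A S := by
  classical
  have hw : ∀ (z : X) (q : ℚ), ∃ a, (ball z q ∩ A).Nonempty → a ∈ ball z q ∩ A := fun z q =>
    ⟨if h : (ball z q ∩ A).Nonempty then h.some else z, fun h => by simpa [h] using h.some_mem⟩
  choose w hw using hw
  refine ⟨⋃ l : List ℚ, (fun c => l.foldl w c) '' C, fun c hc => mem_iUnion.2 ⟨[], c, hc, rfl⟩,
    countable_iUnion fun l => hC.image _, ?_⟩
  rintro z hz r ⟨a, haz, haA⟩
  obtain ⟨q, haq, hqr⟩ := exists_rat_btwn (mem_ball.1 haz)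
  obtain ⟨l, c, hc, rfl⟩ := mem_iUnion.1 hz
  obtain ⟨hwz, hwA⟩ := hw (l.foldl w c) q ⟨a, mem_ball.2 haq, haA⟩
  exact ⟨_, ⟨ball_subset_ball hqr.le hwz, hwA⟩,
    mem_iUnion.2 ⟨l ++ [q], c, hc, by simp [List.foldl_append]⟩⟩

theorem BallWitnessed.closure {A S : Set X} (h : BallWitnessed A S) :
    BallWitnessed A (closure S) := by
  rintro z hz r ⟨a, haz, haA⟩
  set ε := (r - dist a z) / 2 with hε_def
  have hε : 0 < ε := half_pos (sub_pos.2 (mem_ball.1 haz))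
  obtain ⟨z', hz'S, hzz'⟩ := Metric.mem_closure_iff.1 hz ε hε
  have haz' : a ∈ ball z' (r - ε) := by
    rw [mem_ball]
    linarith [dist_triangle a z z']
  obtain ⟨b, ⟨hbz', hbA⟩, hbS⟩ := h z' hz'S (r - ε) ⟨a, haz', haA⟩
  refine ⟨b, ⟨?_, hbA⟩, subset_closure hbS⟩
  rw [mem_ball] at hbz' ⊢
  linarith [dist_triangle b z' z, dist_comm z z']

theorem porosityGamma_subtype_le {A Y : Set X} (hY : BallWitnessed A Y) {x : Y}
    (hx : (x : X) ∈ A) (R : ℝ) :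
    porosityGamma (Subtype.val ⁻¹' A : Set Y) x R ≤ porosityGamma A x (2 * R) := by
  refine iSup₂_le ?_
  rintro r ⟨z, hz⟩
  rcases eq_zero_or_pos r with rfl | hr
  · simp
  have hzx : dist z x < R := (hz (mem_ball_self (NNReal.coe_pos.2 hr))).1
  have hrx : (r : ℝ) ≤ dist x z := not_lt.1 fun hxz => (hz (mem_ball.2 hxz)).2 hx
  refine le_iSup₂_of_le r ⟨z, fun y hy => ⟨?_, fun hyA => ?_⟩⟩ le_rfl
  · rw [mem_ball] at hy ⊢
    linarith [dist_triangle y z x, dist_comm x z, Subtype.dist_eq z x]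
  · obtain ⟨b, ⟨hbz, hbA⟩, hbY⟩ := hY z z.2 r ⟨y, hy, hyA⟩
    exact (hz (show (⟨b, hbY⟩ : Y) ∈ ball z r from hbz)).2 hbA

theorem map_mulLeft_nhdsGT_zero {𝕜 : Type*} [Field 𝕜] [LinearOrder 𝕜] [IsStrictOrderedRing 𝕜]
    [TopologicalSpace 𝕜] [OrderTopology 𝕜] {c : 𝕜} (hc : 0 < c) :
    map (c * ·) (𝓝[>] 0) = 𝓝[>] 0 := by
  conv_lhs => rw [← comap_mulLeft_nhdsGT_zero hc]
  exact map_comap_of_surjective (mul_left_surjective₀ hc.ne') _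

theorem liminf_div_le_mul_liminf_div {f g : ℝ → ℝ≥0∞} {c : ℝ} (hc : 0 < c)
    (hfg : ∀ R, f R ≤ g (c * R)) :
    liminf (fun R => f R / ENNReal.ofReal R) (𝓝[>] 0) ≤
      ENNReal.ofReal c * liminf (fun R => g R / ENNReal.ofReal R) (𝓝[>] 0) := by
  calc liminf (fun R => f R / ENNReal.ofReal R) (𝓝[>] 0)
      ≤ liminf (fun R => ENNReal.ofReal c * (g (c * R) / ENNReal.ofReal (c * R))) (𝓝[>] 0) := by
        refine liminf_le_liminf (Eventually.of_forall fun R => ?_)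
        calc f R / ENNReal.ofReal R ≤ g (c * R) / ENNReal.ofReal R := by gcongr; exact hfg R
          _ = ENNReal.ofReal c * (g (c * R) / ENNReal.ofReal (c * R)) := by
            rw [ENNReal.ofReal_mul hc.le, ← mul_div_assoc, ENNReal.mul_div_mul_left _ _
              (ENNReal.ofReal_pos.2 hc).ne' ENNReal.ofReal_ne_top]
    _ = ENNReal.ofReal c * liminf (fun R => g R / ENNReal.ofReal R) (map (c * ·) (𝓝[>] 0)) := by
        rw [ENNReal.liminf_const_mul_of_ne_top ENNReal.ofReal_ne_top]
        rfl
    _ = ENNReal.ofReal c * liminf (fun R => g R / ENNReal.ofReal R) (𝓝[>] 0) := by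
        rw [map_mulLeft_nhdsGT_zero hc]

theorem not_lowerPorousAt_subtype {A Y : Set X} (hY : BallWitnessed A Y) {x : Y}
    (hx : (x : X) ∈ A) (h : ¬LowerPorousAt A x) :
    ¬LowerPorousAt (Subtype.val ⁻¹' A : Set Y) x := by
  simp only [LowerPorousAt, not_lt, nonpos_iff_eq_zero] at h ⊢
  simpa [h] using liminf_div_le_mul_liminf_div two_pos (porosityGamma_subtype_le hY hx)

end

/-- Separable reduction of non-lower-porosity at the points of a countable subset. -/
theorem not_lowerPorousAt_separable_reduction {X : Type*} [MetricSpace X]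
    (A C : Set X) (hCA : C ⊆ A) (hC : C.Countable) :
    ∃ Y : Set X, IsClosed Y ∧ TopologicalSpace.IsSeparable Y ∧ C ⊆ Y ∧
      ∀ (x : X) (hx : x ∈ Y), x ∈ C →
        ¬ LowerPorousAt A x →
          ¬ LowerPorousAt ((Subtype.val ⁻¹' A) : Set Y) (⟨x, hx⟩ : Y) := by
  obtain ⟨S, hCS, hS, hSA⟩ := exists_countable_ballWitnessed A hC
  exact ⟨closure S, isClosed_closure, hS.isSeparable.closure, hCS.trans subset_closure,
    fun x hx hxC => not_lowerPorousAt_subtype (x := ⟨x, hx⟩) hSA.closure (hCA hxC)⟩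
end

section
/- Let X be a topologically complete metric space, let g be a porosity function, let A ⊆ X, and let d > 2 be a real number. Then for every separable subset S₀ ⊆ X there exists a closed separable set Y ⊆ X with S₀ ⊆ Y such that: if A is σ-⟨g⟩-porous in X, then A ∩ Y is σ-⟨d·g⟩-porous in the metric subspace Y, where d·g denotes the porosity function x ↦ d·g(x). -/
open Metric Filter Set Topology TopologicalSpace NNReal ENNReal

open Classical in
/-- A canonical decomposition of a σ-`⟨g⟩`-porous set, chosen via choice (and arbitrary
otherwise). -/
noncomputable def sigmaDecomp {X : Type*} [MetricSpace X] (g : ℝ → ℝ) (h : ℝ) (A : Set X) :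
    ℕ → Set X :=
  if hp : SigmaGPorous g h A then hp.choose else fun _ => ∅

theorem sigmaDecomp_spec {X : Type*} [MetricSpace X] {g : ℝ → ℝ} {h : ℝ} {A : Set X}
    (hp : SigmaGPorous g h A) :
    (∀ n, GPorous g h (sigmaDecomp g h A n)) ∧ A = ⋃ n, sigmaDecomp g h A n := by
  have : sigmaDecomp g h A = hp.choose := by
    unfold sigmaDecomp; rw [dif_pos hp]
  rw [this]
  exact hp.choose_spec

/-- The predicate describing porosity witnesses near a point `q` with scale `t`. -/
def PorWit {X : Type*} [MetricSpace X] (g : ℝ → ℝ) (h l : ℝ) (S : Set X) (q : X) (t : ℚ) :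
    Prop :=
  ∃ p : X × ℝ, 0 < p.2 ∧ p.2 < h ∧ Metric.ball p.1 p.2 ∩ S = ∅ ∧ dist q p.1 < (t : ℝ) ∧
    (t : ℝ) < l * g p.2

open Classical in
/-- A chosen porosity witness near `q` at scale `t`, if one exists. -/
noncomputable def porWitness {X : Type*} [MetricSpace X] (g : ℝ → ℝ) (h l : ℝ) (S : Set X)
    (q : X) (t : ℚ) : X × ℝ :=
  if hq : PorWit g h l S q t then hq.choose else (q, 0)

theorem porWitness_spec {X : Type*} [MetricSpace X] {g : ℝ → ℝ} {h l : ℝ} {S : Set X}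
    {q : X} {t : ℚ} (hq : PorWit g h l S q t) :
    0 < (porWitness g h l S q t).2 ∧ (porWitness g h l S q t).2 < h ∧
      Metric.ball (porWitness g h l S q t).1 (porWitness g h l S q t).2 ∩ S = ∅ ∧
      dist q (porWitness g h l S q t).1 < (t : ℝ) ∧
      (t : ℝ) < l * g (porWitness g h l S q t).2 := by
  have : porWitness g h l S q t = hq.choose := by
    unfold porWitness; rw [dif_pos hq]
  rw [this]
  exact hq.choose_spec

/-- The iterated closure of `D` under adding chosen porosity witness centers. -/
noncomputable def porSeq {X : Type*} [MetricSpace X] (g : ℝ → ℝ) (h l : ℝ) (A : Set X)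
    (D : Set X) : ℕ → Set X
  | 0 => D
  | (k + 1) => porSeq g h l A D k ∪
      ⋃ (n : ℕ), ⋃ (t : ℚ),
        (fun q => (porWitness g h l (sigmaDecomp g h A n) q t).1) '' porSeq g h l A D k

set_option maxHeartbeats 2000000 in
/-- Separable reduction: σ-`⟨g⟩`-porosity of `A` implies σ-`⟨d·g⟩`-porosity of `A ∩ Y` in `Y`,
for any `d > 2`. -/
theorem sigmaGPorous_separable_reduction_scaled {X : Type*} [MetricSpace X]
    (hX : TopComplete X) (g : ℝ → ℝ) (h : ℝ) (hh : 0 < h) (hg0 : g 0 = 0)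
    (hg : StrictMonoOn g (Set.Ico 0 h)) (A : Set X) (d : ℝ) (hd : 2 < d)
    (S₀ : Set X) (hS₀ : TopologicalSpace.IsSeparable S₀) :
    ∃ Y : Set X, IsClosed Y ∧ TopologicalSpace.IsSeparable Y ∧ S₀ ⊆ Y ∧
      (SigmaGPorous g h A →
        SigmaGPorous (fun t : ℝ => d * g t) h ((Subtype.val ⁻¹' A) : Set Y)) := by
  classical
  obtain ⟨D₀, hD₀c, hD₀sub⟩ := hS₀
  set l : ℝ := (1 + d) / 2 with hl_def
  have hl1 : 1 < l := by rw [hl_def]; linarith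
  have hld : l < d := by rw [hl_def]; linarith
  have hl0 : 0 < l := by linarith
  have hlhalf : (1 : ℝ) / 2 ≤ l - 1 := by rw [hl_def]; linarith
  set κ : ℝ := min (1 / 2) ((d - l) / (2 * l)) with hκ_def
  have hκ0 : 0 < κ := lt_min (by norm_num) (div_pos (by linarith) (by linarith))
  have hκhalf : κ ≤ 1 / 2 := min_le_left _ _
  have hκdl : κ ≤ (d - l) / (2 * l) := min_le_right _ _
  set B : ℕ → Set X := sigmaDecomp g h A with hBdef
  set C : ℕ → Set X := porSeq g h l A D₀ with hCdef
  set CC : Set X := ⋃ k, C k with hCCdef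
  -- CC is countable
  have hCcnt : ∀ k, (C k).Countable := by
    intro k
    induction k with
    | zero => exact hD₀c
    | succ k ih =>
      rw [hCdef]
      show (porSeq g h l A D₀ k ∪ _).Countable
      refine ih.union (Set.countable_iUnion fun n => Set.countable_iUnion fun t => ?_)
      exact (ih.image _)
  have hCCcnt : CC.Countable := Set.countable_iUnion hCcnt
  -- CC is closed under witnesses
  have hCCwit : ∀ q ∈ CC, ∀ (n : ℕ) (t : ℚ), (porWitness g h l (B n) q t).1 ∈ CC := by
    intro q hq n t
    obtain ⟨k, hk⟩ := Set.mem_iUnion.mp hq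
    apply Set.mem_iUnion.mpr ⟨k + 1, ?_⟩
    refine Set.mem_union_right _ ?_
    exact Set.mem_iUnion.mpr ⟨n, Set.mem_iUnion.mpr ⟨t, ⟨q, hk, rfl⟩⟩⟩
  have hD₀CC : D₀ ⊆ CC := fun z hz => Set.mem_iUnion.mpr ⟨0, hz⟩
  refine ⟨closure CC, isClosed_closure, hCCcnt.isSeparable.closure,
    hD₀sub.trans (closure_mono hD₀CC), ?_⟩
  intro hp
  obtain ⟨hBpor, hAeq⟩ := sigmaDecomp_spec hp
  refine ⟨fun n => Subtype.val ⁻¹' (B n), ?_, ?_⟩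
  · -- each piece is ⟨d·g⟩-porous in Y
    intro n x hx
    have hxB : (x : X) ∈ B n := hx
    obtain ⟨c, r, hc, hcr⟩ := hBpor n (x : X) hxB
    -- per-index construction of witnesses in Y
    have key : ∀ m : ℕ, ∃ y : X, y ∈ CC ∧ ∃ ρ : ℝ, 0 < ρ ∧ ρ < h ∧
        Metric.ball y ρ ∩ B n = ∅ ∧ dist (x : X) y < d * g ρ ∧
        dist (x : X) y < dist (x : X) (c m) + 2 * (1 / ((m : ℝ) + 1)) := by
      intro m
      obtain ⟨h1, h2, h3, h4⟩ := hcr m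
      have hδg : dist (x : X) (c m) < g (r m) := Metric.mem_ball.mp h4
      have hrδ : r m ≤ dist (x : X) (c m) := by
        by_contra hcon
        push_neg at hcon
        have : (x : X) ∈ Metric.ball (c m) (r m) ∩ B n := ⟨Metric.mem_ball.mpr hcon, hxB⟩
        rw [h3] at this
        exact this
      have hrg : r m ≤ g (r m) := hrδ.trans hδg.le
      set ε : ℝ := min (1 / ((m : ℝ) + 1)) (κ * r m) with hε_def
      have hε0 : 0 < ε := lt_min (by positivity) (mul_pos hκ0 h1)
      have hεm : ε ≤ 1 / ((m : ℝ) + 1) := min_le_left _ _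
      have hεκ : ε ≤ κ * r m := min_le_right _ _
      have hεhalf : ε ≤ r m / 2 := by
        refine hεκ.trans ?_
        calc κ * r m ≤ (1 / 2) * r m := mul_le_mul_of_nonneg_right hκhalf h1.le
          _ = r m / 2 := by ring
      have hεdl : ε ≤ (d - l) / (2 * l) * r m :=
        hεκ.trans (mul_le_mul_of_nonneg_right hκdl h1.le)
      -- approximate x by q in CC
      obtain ⟨q, hqCC, hqd⟩ := Metric.mem_closure_iff.mp x.2 ε hε0
      have hqd' : dist q (x : X) < ε := by rwa [dist_comm]
      -- choose a rational scale t
      have h5 : dist q (c m) < min (dist (x : X) (c m) + ε) (l * g (r m)) := by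
        have htri : dist q (c m) ≤ dist q (x : X) + dist (x : X) (c m) := dist_triangle _ _ _
        refine lt_min (by linarith) ?_
        have hεlg : ε + g (r m) ≤ l * g (r m) := by
          have h1' : ε ≤ (1 / 2) * r m := by linarith
          have h2' : (1 / 2) * r m ≤ (l - 1) * r m :=
            mul_le_mul_of_nonneg_right hlhalf h1.le
          have h3' : (l - 1) * r m ≤ (l - 1) * g (r m) :=
            mul_le_mul_of_nonneg_left hrg (by linarith)
          nlinarith
        linarith
      obtain ⟨t, ht1, ht2⟩ := exists_rat_btwn h5
      have ht2a : (t : ℝ) < dist (x : X) (c m) + ε := ht2.trans_le (min_le_left _ _)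
      have ht2b : (t : ℝ) < l * g (r m) := ht2.trans_le (min_le_right _ _)
      have hP : PorWit g h l (B n) q t := ⟨(c m, r m), h1, h2, h3, ht1, ht2b⟩
      obtain ⟨hw1, hw2, hw3, hw4, hw5⟩ := porWitness_spec hP
      set y : X := (porWitness g h l (B n) q t).1 with hy_def
      set ρ : ℝ := (porWitness g h l (B n) q t).2 with hρ_def
      refine ⟨y, hCCwit q hqCC n t, ρ, hw1, hw2, hw3, ?_, ?_⟩
      · -- dist x y < d * g ρ
        have htri : dist (x : X) y ≤ dist (x : X) q + dist q y := dist_triangle _ _ _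
        have hqc : dist (x : X) (c m) - ε < dist q (c m) := by
          have htr2 : dist (x : X) (c m) ≤ dist (x : X) q + dist q (c m) :=
            dist_triangle _ _ _
          linarith
        have hlg : r m - ε < l * g ρ := by
          have h6 : r m - ε < (t : ℝ) := by linarith
          linarith
        have hεdl' : ε * (2 * l) ≤ (d - l) * r m := by
          rw [div_mul_eq_mul_div] at hεdl
          exact (le_div_iff₀ (by linarith)).mp hεdl
        have e4 : ε * l ≤ (d - l) * (r m - ε) := by
          nlinarith [mul_nonneg (by linarith : (0:ℝ) ≤ d - l) (by linarith : (0:ℝ) ≤ r m / 2 - ε)]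
        have e5 : ε * l < ((d - l) * g ρ) * l := by nlinarith [mul_lt_mul_of_pos_left hlg (by linarith : (0:ℝ) < d - l)]
        have hεgρ : ε < (d - l) * g ρ := lt_of_mul_lt_mul_right e5 hl0.le
        calc dist (x : X) y ≤ dist (x : X) q + dist q y := htri
          _ < ε + (t : ℝ) := by linarith
          _ < (d - l) * g ρ + l * g ρ := by linarith
          _ = d * g ρ := by ring
      · -- dist x y < dist x (c m) + 2/(m+1)
        have htri : dist (x : X) y ≤ dist (x : X) q + dist q y := dist_triangle _ _ _
        have : dist (x : X) y < ε + (t : ℝ) := by linarith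
        linarith
    choose y hyCC ρ hρ0 hρh hρdisj hρball hρclose using key
    refine ⟨fun m => ⟨y m, subset_closure (hyCC m)⟩, ρ, ?_, ?_⟩
    · -- convergence
      rw [tendsto_iff_dist_tendsto_zero]
      apply squeeze_zero (fun m => dist_nonneg)
        (g := fun m => dist (c m) (x : X) + 2 * (1 / ((m : ℝ) + 1)))
      · intro m
        rw [Subtype.dist_eq]
        show dist (y m) (x : X) ≤ _
        rw [dist_comm]
        rw [dist_comm (c m) (x : X)]
        exact (hρclose m).le
      · have h1 : Tendsto (fun m : ℕ => dist (c m) (x : X)) atTop (nhds 0) :=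
          tendsto_iff_dist_tendsto_zero.mp hc
        have h2 : Tendsto (fun m : ℕ => 2 * (1 / ((m : ℝ) + 1))) atTop (nhds 0) := by
          have := tendsto_one_div_add_atTop_nhds_zero_nat.const_mul (2 : ℝ)
          simpa using this
        simpa using h1.add h2
    · intro m
      refine ⟨hρ0 m, hρh m, ?_, ?_⟩
      · rw [Set.eq_empty_iff_forall_notMem]
        rintro z ⟨hz1, hz2⟩
        have hz1' : (z : X) ∈ Metric.ball (y m) (ρ m) := by
          rw [Metric.mem_ball] at hz1 ⊢
          rwa [Subtype.dist_eq] at hz1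
        exact Set.eq_empty_iff_forall_notMem.mp (hρdisj m) (z : X) ⟨hz1', hz2⟩
      · rw [Metric.mem_ball, Subtype.dist_eq]
        exact hρball m
  · rw [hAeq, Set.preimage_iUnion]
end

section
/- Let X be a topologically complete metric space, let g be a porosity function for which there exist d > 2 and δ > 0 such that g(x) > d·x for all x ∈ (0,δ), and let A ⊆ X. Then for every separable subset S₀ ⊆ X there exists a closed separable set Y ⊆ X with S₀ ⊆ Y such that: if A is σ-⟨g⟩-porous in X, then A ∩ Y is σ-⟨g⟩-porous in the metric subspace Y. -/
/-!
Fix a decomposition `A = ⋃ Bₙ` into `⟨g⟩`-porous sets. Starting from a countable dense subset of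
`S₀`, close it up countably many times so that whenever a hole `U(c, r)` of some `Bₙ` comes within
a rational distance `q` of a point `y` of the set with `g r` above a rational `t`, a hole with the
same properties has its centre in the set. The closure `Y` of the resulting countable set `D` is
closed and separable, and for `x ∈ Y` the holes witnessing porosity of `Bₙ` at `x` can be replaced
by holes centred in `D ⊆ Y`, which witness porosity of `Bₙ ∩ Y` at `x` in the subspace `Y`.
-/

open Metric Filter Set Topology TopologicalSpace NNReal ENNReal

theorem exists_countable_superset_forall_exists_mem {α ι : Type*} [Countable ι]
    (P : α → ι → α → Prop) {T : Set α} (hT : T.Countable) :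
    ∃ D : Set α, D.Countable ∧ T ⊆ D ∧ ∀ y ∈ D, ∀ i, (∃ c, P y i c) → ∃ c ∈ D, P y i c := by
  have hchoice : ∀ y i, ∃ c, (∃ c, P y i c) → P y i c := fun y i =>
    (em (∃ c, P y i c)).elim (fun ⟨c, hc⟩ => ⟨c, fun _ => hc⟩) fun hn => ⟨y, fun he => (hn he).elim⟩
  choose w hw using hchoice
  let F : Set α → Set α := fun s => s ∪ ⋃ y ∈ s, range (w y)
  have hF : ∀ s, s.Countable → (F s).Countable := fun s hs =>
    hs.union (hs.biUnion fun y _ => countable_range (w y))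
  refine ⟨⋃ k, F^[k] T, countable_iUnion fun k => Function.Iterate.rec _ hT hF k,
    subset_iUnion (fun k => F^[k] T) 0, fun y hy i hi => ⟨w y i, ?_, hw y i hi⟩⟩
  obtain ⟨k, hk⟩ := mem_iUnion.1 hy
  refine mem_iUnion.2 ⟨k + 1, ?_⟩
  rw [Function.iterate_succ_apply']
  exact Or.inr (mem_biUnion hk (mem_range_self i))

section Porosity

variable {X : Type*} [MetricSpace X] {g : ℝ → ℝ} {h : ℝ}

def IsHole (h : ℝ) (B : Set X) (c : X) (r : ℝ) : Prop :=
  0 < r ∧ r < h ∧ ball c r ∩ B = ∅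

theorem IsHole.subtype_val_preimage {Y : Set X} {B : Set X} {c : Y} {r : ℝ}
    (hole : IsHole h B c r) : IsHole h (Subtype.val ⁻¹' B : Set Y) c r := by
  refine ⟨hole.1, hole.2.1, ?_⟩
  rw [← isometry_subtype_coe.preimage_ball, ← preimage_inter, hole.2.2, preimage_empty]

theorem gPorousAt_iff_forall_pos {B : Set X} {x : X} :
    GPorousAt g h B x ↔
      ∀ ε > 0, ∃ c r, IsHole h B c r ∧ dist c x < ε ∧ dist x c < g r := by
  constructor
  · rintro ⟨c, r, hc, hcr⟩ ε hε
    obtain ⟨N, hN⟩ := Metric.tendsto_atTop.1 hc ε hε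
    obtain ⟨hr, hrh, hball, hx⟩ := hcr N
    exact ⟨c N, r N, ⟨hr, hrh, hball⟩, hN N le_rfl, hx⟩
  · intro H
    choose c r hole hc hx using fun k : ℕ => H (1 / (k + 1)) Nat.one_div_pos_of_nat
    refine ⟨c, r, ?_, fun k => ⟨(hole k).1, (hole k).2.1, (hole k).2.2, hx k⟩⟩
    exact tendsto_iff_dist_tendsto_zero.2 <| squeeze_zero (fun _ => dist_nonneg)
      (fun k => (hc k).le) tendsto_one_div_add_atTop_nhds_zero_nat

theorem gPorousAt_subtype_of_forall_pos {Y : Set X} {B : Set X} {x : Y}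
    (H : ∀ ε > 0, ∃ c ∈ Y, ∃ r, IsHole h B c r ∧ dist c x < ε ∧ dist (x : X) c < g r) :
    GPorousAt g h (Subtype.val ⁻¹' B : Set Y) x := by
  refine gPorousAt_iff_forall_pos.2 fun ε hε => ?_
  obtain ⟨c, hcY, r, hole, hcx, hxc⟩ := H ε hε
  exact ⟨⟨c, hcY⟩, r, hole.subtype_val_preimage, hcx, hxc⟩

theorem exists_mem_isHole_of_gPorousAt {B D : Set X}
    (hD : ∀ y ∈ D, ∀ q t : ℚ, (∃ c r, IsHole h B c r ∧ dist c y < q ∧ (t : ℝ) < g r) →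
      ∃ c ∈ D, ∃ r, IsHole h B c r ∧ dist c y < q ∧ (t : ℝ) < g r)
    {x : X} (hx : x ∈ closure D) (hpor : GPorousAt g h B x) {ε : ℝ} (hε : 0 < ε) :
    ∃ c ∈ D, ∃ r, IsHole h B c r ∧ dist c x < ε ∧ dist x c < g r := by
  obtain ⟨c, r, hole, hcx, hxc⟩ := gPorousAt_iff_forall_pos.1 hpor ε hε
  have hlt : dist x c < min ε (g r) := lt_min (by rwa [dist_comm]) hxc
  -- the slack `3η` absorbs the step to a nearby `y ∈ D` and the two rational roundings
  obtain ⟨η, hη, hηε, hηg⟩ : ∃ η > 0, dist x c + 3 * η < ε ∧ dist x c + 3 * η < g r :=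
    ⟨(min ε (g r) - dist x c) / 4, by linarith, by linarith [min_le_left ε (g r)],
      by linarith [min_le_right ε (g r)]⟩
  obtain ⟨y, hyD, hxy⟩ := Metric.mem_closure_iff.1 hx η hη
  obtain ⟨q, hq, hq'⟩ := exists_rat_btwn (show dist x c + η < dist x c + 2 * η by linarith)
  obtain ⟨t, ht, ht'⟩ := exists_rat_btwn hηg
  have hcy : dist c y < q := by linarith [dist_triangle c x y, dist_comm x c]
  obtain ⟨c', hc'D, r', hole', hc'y, htr'⟩ := hD y hyD q t ⟨c, r, hole, hcy, ht'⟩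
  have hxc' : dist x c' < dist x c + 3 * η := by linarith [dist_triangle x y c', dist_comm c' y]
  exact ⟨c', hc'D, r', hole', by rw [dist_comm]; linarith, by linarith⟩

theorem exists_isClosed_isSeparable_gPorousAt_subtype (B : ℕ → Set X) {S₀ : Set X}
    (hS₀ : IsSeparable S₀) :
    ∃ Y : Set X, IsClosed Y ∧ IsSeparable Y ∧ S₀ ⊆ Y ∧
      ∀ n (x : Y), GPorousAt g h (B n) x → GPorousAt g h (Subtype.val ⁻¹' B n : Set Y) x := by
  obtain ⟨T, hT, hST⟩ := hS₀
  obtain ⟨D, hD, hTD, hDholes⟩ := exists_countable_superset_forall_exists_mem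
    (fun y (i : ℕ × ℚ × ℚ) c => ∃ r, IsHole h (B i.1) c r ∧ dist c y < i.2.1 ∧ (i.2.2 : ℝ) < g r)
    hT
  refine ⟨closure D, isClosed_closure, hD.isSeparable.closure, hST.trans (closure_mono hTD),
    fun n x hx => gPorousAt_subtype_of_forall_pos fun ε hε => ?_⟩
  obtain ⟨c, hcD, hc⟩ :=
    exists_mem_isHole_of_gPorousAt (fun y hy q t => hDholes y hy (n, q, t)) x.2 hx hε
  exact ⟨c, subset_closure hcD, hc⟩

end Porosity

theorem sigmaGPorous_separable_reduction_general {X : Type*} [MetricSpace X]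
    (g : ℝ → ℝ) (h : ℝ)
    (A : Set X) (S₀ : Set X) (hS₀ : TopologicalSpace.IsSeparable S₀) :
    ∃ Y : Set X, IsClosed Y ∧ TopologicalSpace.IsSeparable Y ∧ S₀ ⊆ Y ∧
      (SigmaGPorous g h A → SigmaGPorous g h ((Subtype.val ⁻¹' A) : Set Y)) := by
  by_cases hA : SigmaGPorous g h A
  · obtain ⟨B, hB, rfl⟩ := hA
    obtain ⟨Y, hYc, hYs, hSY, hpor⟩ := exists_isClosed_isSeparable_gPorousAt_subtype B hS₀
    refine ⟨Y, hYc, hYs, hSY, fun _ => ⟨fun n => Subtype.val ⁻¹' B n, ?_, preimage_iUnion⟩⟩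
    exact fun n x hx => hpor n x (hB n x hx)
  · exact ⟨closure S₀, isClosed_closure, hS₀.closure, subset_closure, fun hA' => (hA hA').elim⟩

/-- Separable reduction of σ-`⟨g⟩`-porosity for porosity functions satisfying `g x > d * x`
near `0` for some `d > 2`. -/
theorem sigmaGPorous_separable_reduction {X : Type*} [MetricSpace X]
    (hX : TopComplete X) (g : ℝ → ℝ) (h : ℝ) (hh : 0 < h) (hg0 : g 0 = 0)
    (hg : StrictMonoOn g (Set.Ico 0 h))
    (hgrow : ∃ (d : ℝ) (δ : ℝ), 2 < d ∧ 0 < δ ∧ ∀ x ∈ Set.Ioo (0 : ℝ) δ, d * x < g x)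
    (A : Set X) (S₀ : Set X) (hS₀ : TopologicalSpace.IsSeparable S₀) :
    ∃ Y : Set X, IsClosed Y ∧ TopologicalSpace.IsSeparable Y ∧ S₀ ⊆ Y ∧
      (SigmaGPorous g h A → SigmaGPorous g h ((Subtype.val ⁻¹' A) : Set Y)) :=
  sigmaGPorous_separable_reduction_general g h A S₀ hS₀
end
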